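/- arXiv:1109.6348 — 13 statements merged into one kernel-verified Lean document; each statement's English description precedes it below -/
import Mathlib

section
/- Let n ≥ 2 and 1 ≤ k with 2k ≤ n, and let H(n,k) be the Boolean function on n variables whose models are exactly the assignments with exactly k variables set to true. Then every model of H(n,k) is a δ(k,k)-model of H(n,k). -/
open scoped symmDiff


/-- `flipSet X S` is the assignment `X` with the bits in `S` flipped. -/
def flipSet {V : Type*} [DecidableEq V] (X : V → Bool) (S : Finset V) : V → Bool :=
  fun i => if i ∈ S then ! X i else X i

/-- A `δ(r,s)`-model of `φ`: a model such that for every nonempty break set `B` of at most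
`r` indices there is a repair set `S` of at most `s` indices disjoint from `B` such that
flipping `B` and then `S` yields a model. -/
def IsDeltaModel {V : Type*} [DecidableEq V] (φ : (V → Bool) → Prop) (r s : ℕ)
    (X : V → Bool) : Prop :=
  φ X ∧ ∀ B : Finset V, B.Nonempty → B.card ≤ r →
    ∃ S : Finset V, S.card ≤ s ∧ Disjoint S B ∧ φ (flipSet (flipSet X B) S)

/-- `δ^k(r,s)`-models, defined inductively: `δ^0(r,s)`-models are the models of `φ`;
a `δ^(k+1)(r,s)`-model is a `δ^k(r,s)`-model whose breaks are all repairable to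
`δ^k(r,s)`-models. -/
def IsDeltaKModel {V : Type*} [DecidableEq V] (φ : (V → Bool) → Prop) (r s : ℕ) :
    ℕ → (V → Bool) → Prop
  | 0, X => φ X
  | k + 1, X => IsDeltaKModel φ r s k X ∧
      ∀ B : Finset V, B.Nonempty → B.card ≤ r →
        ∃ S : Finset V, S.card ≤ s ∧ Disjoint S B ∧
          IsDeltaKModel φ r s k (flipSet (flipSet X B) S)

/-- A `δ*(1,1)`-model: an assignment that is a `δ^k(1,1)`-model for every `k ≥ 0`. -/
def IsDeltaStarModel {V : Type*} [DecidableEq V] (φ : (V → Bool) → Prop)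
    (X : V → Bool) : Prop :=
  ∀ k : ℕ, IsDeltaKModel φ 1 1 k X

/-- The set of true bits of `flipSet X B` is the symmetric difference of the true
bits of `X` with `B`. -/
lemma flip_trues {n : ℕ} (X : Fin n → Bool) (B : Finset (Fin n)) :
    (Finset.univ.filter fun i => flipSet X B i = true)
      = (Finset.univ.filter fun i => X i = true) ∆ B := by
  ext i
  simp only [Finset.mem_filter, Finset.mem_univ, true_and, Finset.mem_symmDiff, flipSet]
  by_cases h : i ∈ B <;> cases hXi : X i <;> simp [h, hXi]

/-- For `n ≥ 2`, `1 ≤ k`, `2k ≤ n`, every model of `H(n,k)` (the Boolean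
function whose models are exactly the assignments with exactly `k` variables set to true)
is a `δ(k,k)`-model of `H(n,k)`. -/
theorem statement1 (n k : ℕ) (hn : 2 ≤ n) (hk : 1 ≤ k) (hkn : 2 * k ≤ n)
    (φ : (Fin n → Bool) → Prop)
    (hφ : ∀ X : Fin n → Bool, φ X ↔ (Finset.univ.filter fun i => X i = true).card = k) :
    ∀ X : Fin n → Bool, φ X → IsDeltaModel φ k k X := by
  intro X hX
  refine ⟨hX, ?_⟩
  intro B hBne hBk
  set T : Finset (Fin n) := Finset.univ.filter fun i => X i = true with hTdef
  have hT : T.card = k := (hφ X).mp hX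
  set M : Finset (Fin n) := T ∆ B with hMdef
  have hMeq : (Finset.univ.filter fun i => flipSet X B i = true) = M :=
    flip_trues X B
  have key : ∀ S : Finset (Fin n),
      φ (flipSet (flipSet X B) S) ↔ (M ∆ S).card = k := by
    intro S
    rw [hφ, flip_trues, hMeq]
  -- cardinal bookkeeping
  have h1 : (T ∩ B).card + (T \ B).card = T.card := Finset.card_inter_add_card_sdiff T B
  have h2 : (B ∩ T).card + (B \ T).card = B.card := Finset.card_inter_add_card_sdiff B T
  have hBT : (B ∩ T).card = (T ∩ B).card := by rw [Finset.inter_comm]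
  have hMun : M = (T \ B) ∪ (B \ T) := by
    rw [hMdef, symmDiff_def]; rfl
  have hMcard : M.card = (T \ B).card + (B \ T).card := by
    rw [hMun, Finset.card_union_of_disjoint (disjoint_sdiff_sdiff)]
  rcases le_or_gt k M.card with hcase | hcase
  · -- too many trues: flip some trues outside B to false
    set d := M.card - k with hd
    have hdle : d ≤ (T \ B).card := by omega
    obtain ⟨S, hSsub, hScard⟩ := Finset.exists_subset_card_eq (s := T \ B) (n := d) hdle
    have hSM : S ⊆ M := hSsub.trans (by rw [hMun]; exact Finset.subset_union_left)
    refine ⟨S, ?_, ?_, ?_⟩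
    · have : (B \ T).card ≤ B.card := Finset.card_le_card (Finset.sdiff_subset)
      omega
    · exact Finset.disjoint_left.mpr fun i hi hiB =>
        (Finset.mem_sdiff.mp (hSsub hi)).2 hiB
    · rw [key, symmDiff_of_ge hSM, Finset.card_sdiff_of_subset hSM, hScard]
      omega
  · -- too few trues: flip some falses outside T ∪ B to true
    set d := k - M.card with hd
    have hcardTB : (T ∪ B).card = (T \ B).card + B.card := by
      rw [← Finset.card_sdiff_add_card]
    have hout : ((Finset.univ : Finset (Fin n)) \ (T ∪ B)).card = n - (T ∪ B).card := by
      rw [Finset.card_sdiff_of_subset (Finset.subset_univ _), Finset.card_univ, Fintype.card_fin]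
    have hTBk : (T ∩ B).card ≤ k := by
      have := Finset.card_le_card (Finset.inter_subset_left (s₁ := T) (s₂ := B))
      omega
    have hdle : d ≤ ((Finset.univ : Finset (Fin n)) \ (T ∪ B)).card := by
      rw [hout]; omega
    obtain ⟨S, hSsub, hScard⟩ :=
      Finset.exists_subset_card_eq (s := (Finset.univ : Finset (Fin n)) \ (T ∪ B)) (n := d) hdle
    have hSdisjM : Disjoint M S := by
      refine Finset.disjoint_left.mpr fun i hiM hiS => ?_
      have := (Finset.mem_sdiff.mp (hSsub hiS)).2
      rw [hMun] at hiM
      rcases Finset.mem_union.mp hiM with h | h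
      · exact this (Finset.mem_union_left _ (Finset.mem_sdiff.mp h).1)
      · exact this (Finset.mem_union_right _ (Finset.mem_sdiff.mp h).1)
    refine ⟨S, by omega, ?_, ?_⟩
    · exact Finset.disjoint_left.mpr fun i hi hiB =>
        (Finset.mem_sdiff.mp (hSsub hi)).2 (Finset.mem_union_right _ hiB)
    · rw [key, hSdisjM.symmDiff_eq_sup]
      have : (M ⊔ S).card = M.card + S.card :=
        Finset.card_union_of_disjoint hSdisjM
      rw [this, hScard]
      omega
end

section
/- Let φ be a Boolean function on n ≥ 1 variables and define the Boolean function φ' on n+1 variables by: φ'(Y) = true iff φ of the restriction of Y to the first n coordinates is true, or Y assigns true to the (n+1)-th variable. Then φ is satisfiable if and only if φ' has a δ*(1,1)-model. -/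
namespace Statement2Aux

variable {n : ℕ}

def Good (X : Fin n → Bool) (Y : Fin (n+1) → Bool) : Prop :=
  (Y (Fin.last n) = true ∧ ∃ i : Fin n, ∀ j : Fin n, j ≠ i → Y j.castSucc = X j) ∨
  (Y (Fin.last n) = false ∧ ∀ j : Fin n, Y j.castSucc = X j)

lemma cs_ne_last (j : Fin n) : (j.castSucc : Fin (n+1)) ≠ Fin.last n :=
  (Fin.castSucc_lt_last j).ne

lemma bnot_eq_of_ne {a b : Bool} (h : a ≠ b) : !a = b := by
  cases a <;> cases b <;> simp_all

lemma good_step (hn : 1 ≤ n) (X : Fin n → Bool) (Y : Fin (n+1) → Bool) (hY : Good X Y)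
    (B : Finset (Fin (n+1))) (hB : B.Nonempty) (hBc : B.card ≤ 1) :
    ∃ S : Finset (Fin (n+1)), S.card ≤ 1 ∧ Disjoint S B ∧
      Good X (flipSet (flipSet Y B) S) := by
  have hB1 : B.card = 1 := le_antisymm hBc (Finset.one_le_card.mpr hB)
  obtain ⟨b, rfl⟩ := Finset.card_eq_one.mp hB1
  rcases Fin.eq_castSucc_or_eq_last b with ⟨m, rfl⟩ | rfl
  · -- break a first coordinate m
    rcases hY with ⟨hlast, i, hi⟩ | ⟨hlast, hall⟩
    · by_cases hix : Y i.castSucc = X i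
      · refine ⟨∅, by simp, by simp, Or.inl ⟨?_, m, fun j hj => ?_⟩⟩
        · simpa [flipSet, (cs_ne_last m).symm] using hlast
        · have hjm : (j.castSucc : Fin (n+1)) ≠ m.castSucc := by
            simpa [Fin.castSucc_inj] using hj
          simp only [flipSet, Finset.notMem_empty, if_false, Finset.mem_singleton,
            hjm, if_neg hjm]
          by_cases hji : j = i
          · subst hji; exact hix
          · exact hi j hji
      · by_cases hmi : m = i
        · subst hmi
          refine ⟨∅, by simp, by simp, Or.inl ⟨?_, m, fun j hj => ?_⟩⟩
          · simpa [flipSet, (cs_ne_last m).symm] using hlast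
          · have hjm : (j.castSucc : Fin (n+1)) ≠ m.castSucc := by
              simpa [Fin.castSucc_inj] using hj
            simp only [flipSet, Finset.notMem_empty, if_false, Finset.mem_singleton,
              if_neg hjm]
            exact hi j hj
        · refine ⟨{i.castSucc}, by simp, ?_, Or.inl ⟨?_, m, fun j hj => ?_⟩⟩
          · refine Finset.disjoint_singleton.mpr ?_
            exact fun h => hmi (Fin.castSucc_inj.mp h).symm
          · simpa [flipSet, (cs_ne_last m).symm, (cs_ne_last i).symm] using hlast
          · have hjm : (j.castSucc : Fin (n+1)) ≠ m.castSucc := by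
              simpa [Fin.castSucc_inj] using hj
            by_cases hji : j = i
            · subst hji
              simp only [flipSet, Finset.mem_singleton, if_pos rfl, if_neg hjm, if_true]
              revert hix; cases Y j.castSucc <;> cases X j <;> simp
            · have hjis : (j.castSucc : Fin (n+1)) ≠ i.castSucc := by
                simpa [Fin.castSucc_inj] using hji
              simp only [flipSet, Finset.mem_singleton, if_neg hjis, if_neg hjm]
              exact hi j hji
    · refine ⟨{Fin.last n}, by simp, ?_, Or.inl ⟨?_, m, fun j hj => ?_⟩⟩
      · refine Finset.disjoint_singleton.mpr ?_
        exact fun h => cs_ne_last m h.symm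
      · simp [flipSet, (cs_ne_last m).symm, hlast]
      · have hjm : (j.castSucc : Fin (n+1)) ≠ m.castSucc := by
          simpa [Fin.castSucc_inj] using hj
        simp only [flipSet, Finset.mem_singleton, if_neg (cs_ne_last j), if_neg hjm]
        exact hall j
  · -- break last
    rcases hY with ⟨hlast, i, hi⟩ | ⟨hlast, hall⟩
    · by_cases hix : Y i.castSucc = X i
      · refine ⟨∅, by simp, by simp, Or.inr ⟨?_, fun j => ?_⟩⟩
        · simp [flipSet, hlast]
        · simp only [flipSet, Finset.notMem_empty, if_false, Finset.mem_singleton,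
            if_neg (cs_ne_last j)]
          by_cases hji : j = i
          · subst hji; exact hix
          · exact hi j hji
      · refine ⟨{i.castSucc}, by simp, ?_, Or.inr ⟨?_, fun j => ?_⟩⟩
        · refine Finset.disjoint_singleton.mpr ?_
          exact cs_ne_last i
        · simp [flipSet, (cs_ne_last i).symm, hlast]
        · by_cases hji : j = i
          · subst hji
            simp only [flipSet, Finset.mem_singleton, if_pos rfl, if_neg (cs_ne_last j), if_true]
            revert hix; cases Y j.castSucc <;> cases X j <;> simp
          · have hjis : (j.castSucc : Fin (n+1)) ≠ i.castSucc := by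
              simpa [Fin.castSucc_inj] using hji
            simp only [flipSet, Finset.mem_singleton, if_neg hjis, if_neg (cs_ne_last j)]
            exact hi j hji
    · refine ⟨∅, by simp, by simp, Or.inl ⟨?_, ⟨0, hn⟩, fun j _ => ?_⟩⟩
      · simp [flipSet, hlast]
      · simp only [flipSet, Finset.notMem_empty, if_false, Finset.mem_singleton,
          if_neg (cs_ne_last j)]
        exact hall j

lemma good_delta (hn : 1 ≤ n) (φ : (Fin n → Bool) → Prop) (X : Fin n → Bool) (hX : φ X) :
    ∀ k (Y : Fin (n+1) → Bool), Good X Y →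
      IsDeltaKModel
        (fun Y : Fin (n + 1) → Bool =>
          φ (fun i : Fin n => Y i.castSucc) ∨ Y (Fin.last n) = true) 1 1 k Y := by
  intro k
  induction k with
  | zero =>
    intro Y hY
    rcases hY with ⟨hlast, _⟩ | ⟨_, hall⟩
    · exact Or.inr hlast
    · refine Or.inl ?_
      have : (fun i : Fin n => Y i.castSucc) = X := funext hall
      rw [this]; exact hX
  | succ k ih =>
    intro Y hY
    refine ⟨ih Y hY, fun B hB hBc => ?_⟩
    obtain ⟨S, h1, h2, h3⟩ := good_step hn X Y hY B hB hBc
    exact ⟨S, h1, h2, ih _ h3⟩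

end Statement2Aux

/-- For `φ` on `n ≥ 1` variables and `φ'` on `n+1` variables defined by
`φ'(Y) = φ(Y restricted to the first n coordinates) ∨ (Y assigns true to variable n+1)`,
`φ` is satisfiable iff `φ'` has a `δ*(1,1)`-model. -/
theorem statement2 (n : ℕ) (hn : 1 ≤ n) (φ : (Fin n → Bool) → Prop) :
    (∃ X : Fin n → Bool, φ X) ↔
      ∃ Y : Fin (n + 1) → Bool,
        IsDeltaStarModel
          (fun Y : Fin (n + 1) → Bool =>
            φ (fun i : Fin n => Y i.castSucc) ∨ Y (Fin.last n) = true) Y := by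
  constructor
  · rintro ⟨X, hX⟩
    refine ⟨Fin.snoc X true, fun k => ?_⟩
    refine Statement2Aux.good_delta hn φ X hX k _ ?_
    exact Or.inl ⟨by simp, ⟨0, hn⟩, fun j _ => by simp⟩
  · rintro ⟨Y, hY⟩
    have h1 := hY 1
    obtain ⟨h0, hstep⟩ := h1
    by_cases hl : Y (Fin.last n) = true
    · obtain ⟨S, hS1, hS2, hS3⟩ := hstep {Fin.last n} ⟨_, Finset.mem_singleton_self _⟩
        (by simp)
      rcases hS3 with hφ | hlast
      · exact ⟨_, hφ⟩
      · exfalso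
        have hns : Fin.last n ∉ S := Finset.disjoint_singleton_right.mp hS2
        rw [show flipSet (flipSet Y {Fin.last n}) S (Fin.last n)
              = !Y (Fin.last n) by simp [flipSet, hns]] at hlast
        rw [hl] at hlast
        simp at hlast
    · rcases h0 with hφ | hlast
      · exact ⟨_, hφ⟩
      · exact absurd hlast hl
end

section
/- Let k ≥ 1 be fixed, let φ be a Boolean function on n ≥ 1 variables, and define the Boolean function φ' on n+1 variables by: φ'(Y) = true iff φ of the restriction of Y to the first n coordinates is true, or Y assigns true to the (n+1)-th variable. Then φ is satisfiable if and only if φ' has a δ^k(1,1)-model. -/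
/-- A `δ^(k+1)`-model is a `δ^1`-model. -/
lemma deltaK_to_one {V : Type*} [DecidableEq V] (ψ : (V → Bool) → Prop) (r s : ℕ) :
    ∀ k (X : V → Bool), IsDeltaKModel ψ r s (k + 1) X → IsDeltaKModel ψ r s 1 X
  | 0, _, h => h
  | k + 1, X, h => deltaK_to_one ψ r s k X h.1

lemma flipSet_singleton {V : Type*} [DecidableEq V] (Y : V → Bool) (b j : V) :
    flipSet Y {b} j = if j = b then !Y j else Y j := by
  simp [flipSet]

lemma aux_inv (n : ℕ) (φ : (Fin n → Bool) → Prop) (X : Fin n → Bool) (hX : φ X) :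
    ∀ k (Y : Fin (n + 1) → Bool),
      ((∀ i : Fin n, Y i.castSucc = X i) ∨
        (Y (Fin.last n) = true ∧ ∃ e : Fin n, ∀ i, i ≠ e → Y i.castSucc = X i)) →
      IsDeltaKModel
        (fun Y : Fin (n + 1) → Bool =>
          φ (fun i : Fin n => Y i.castSucc) ∨ Y (Fin.last n) = true) 1 1 k Y := by
  intro k
  induction k with
  | zero =>
    intro Y hI
    rcases hI with h | ⟨hl, _⟩
    · left
      have : (fun i : Fin n => Y i.castSucc) = X := funext h
      rw [this]; exact hX
    · right; exact hl
  | succ k ih =>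
    intro Y hI
    refine ⟨ih Y hI, ?_⟩
    intro B hBne hBcard
    obtain ⟨b, rfl⟩ := Finset.card_eq_one.mp
      (le_antisymm hBcard (Finset.card_pos.mpr hBne))
    -- normalize the invariant
    have hI' : (∀ i : Fin n, Y i.castSucc = X i) ∨
        (Y (Fin.last n) = true ∧ ∃ e : Fin n,
          (∀ i, i ≠ e → Y i.castSucc = X i) ∧ Y e.castSucc = !X e) := by
      rcases hI with h | ⟨hl, e0, h0⟩
      · exact Or.inl h
      by_cases hall : ∀ i : Fin n, Y i.castSucc = X i
      · exact Or.inl hall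
      · push_neg at hall
        obtain ⟨e, he⟩ := hall
        have hee0 : e = e0 := by
          by_contra hne
          exact he (h0 e hne)
        subst hee0
        refine Or.inr ⟨hl, e, h0, ?_⟩
        revert he
        cases hYe : Y e.castSucc <;> cases hXe : X e <;> simp
    by_cases hbl : b = Fin.last n
    · subst hbl
      rcases hI' with hall | ⟨hl, e, hagree, hflip⟩
      · refine ⟨∅, by simp, by simp, ih _ ?_⟩
        left
        intro i
        simp [flipSet, (Fin.castSucc_lt_last i).ne, hall i]
      · refine ⟨{e.castSucc}, by simp, ?_, ih _ ?_⟩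
        · rw [Finset.disjoint_singleton]
          exact (Fin.castSucc_lt_last e).ne
        left
        intro i
        by_cases hie : i = e
        · subst hie
          simp [flipSet_singleton, flipSet, (Fin.castSucc_lt_last i).ne, hflip]
        · simp [flipSet_singleton, flipSet, hie, (Fin.castSucc_lt_last i).ne,
            fun h => hie (Fin.castSucc_injective n h), hagree i hie]
    · obtain ⟨d, rfl⟩ := Fin.exists_castSucc_eq.2 hbl
      rcases hI' with hall | ⟨hl, e, hagree, hflip⟩
      · by_cases hl : Y (Fin.last n) = true
        · refine ⟨∅, by simp, by simp, ih _ ?_⟩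
          right
          refine ⟨?_, d, fun i hid => ?_⟩
          · simp [flipSet, (Fin.castSucc_lt_last d).ne.symm, hl]
          · simp [flipSet, hid, fun h => hid (Fin.castSucc_injective n h), hall i]
        · refine ⟨{Fin.last n}, by simp, ?_, ih _ ?_⟩
          · rw [Finset.disjoint_singleton]
            exact (Fin.castSucc_lt_last d).ne.symm
          right
          refine ⟨?_, d, fun i hid => ?_⟩
          · simp only [Bool.not_eq_true] at hl
            simp [flipSet, (Fin.castSucc_lt_last d).ne.symm, hl]
          · simp [flipSet, hid, (Fin.castSucc_lt_last i).ne,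
              fun h => hid (Fin.castSucc_injective n h), hall i]
      · by_cases hde : e = d
        · subst hde
          refine ⟨∅, by simp, by simp, ih _ ?_⟩
          left
          intro i
          by_cases hie : i = e
          · subst hie
            simp [flipSet, hflip]
          · simp [flipSet, hie, fun h => hie (Fin.castSucc_injective n h), hagree i hie]
        · refine ⟨{e.castSucc}, by simp, ?_, ih _ ?_⟩
          · rw [Finset.disjoint_singleton]
            exact fun h => hde (Fin.castSucc_injective n h)
          right
          refine ⟨?_, d, fun i hid => ?_⟩
          · simp [flipSet, (Fin.castSucc_lt_last e).ne.symm,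
              (Fin.castSucc_lt_last d).ne.symm, hl]
          · by_cases hie : i = e
            · subst hie
              simp [flipSet, hde, fun h => hid (Fin.castSucc_injective n h), hflip]
            · simp [flipSet, hie, hid, fun h => hie (Fin.castSucc_injective n h),
                fun h => hid (Fin.castSucc_injective n h), hagree i hie]

/-- For fixed `k ≥ 1`, `φ` on `n ≥ 1` variables, and `φ'` on `n+1` variables
defined by `φ'(Y) = φ(Y restricted to the first n coordinates) ∨ (Y assigns true to
variable n+1)`, `φ` is satisfiable iff `φ'` has a `δ^k(1,1)`-model. -/
theorem statement3 (k : ℕ) (hk : 1 ≤ k) (n : ℕ) (hn : 1 ≤ n)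
    (φ : (Fin n → Bool) → Prop) :
    (∃ X : Fin n → Bool, φ X) ↔
      ∃ Y : Fin (n + 1) → Bool,
        IsDeltaKModel
          (fun Y : Fin (n + 1) → Bool =>
            φ (fun i : Fin n => Y i.castSucc) ∨ Y (Fin.last n) = true) 1 1 k Y := by
  constructor
  · rintro ⟨X, hX⟩
    refine ⟨Fin.snoc X true, aux_inv n φ X hX k _ (Or.inl fun i => ?_)⟩
    simp
  · rintro ⟨Y, hY⟩
    obtain ⟨m, rfl⟩ : ∃ m, k = m + 1 := ⟨k - 1, by omega⟩
    have h1 := deltaK_to_one _ 1 1 m Y hY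
    obtain ⟨h0, hbr⟩ := h1
    by_cases hl : Y (Fin.last n) = true
    · obtain ⟨S, hScard, hdisj, hφ⟩ :=
        hbr {Fin.last n} (Finset.singleton_nonempty _) (by simp)
      rcases hφ with h | h
      · exact ⟨_, h⟩
      · exfalso
        have hlS : Fin.last n ∉ S := fun hm =>
          (Finset.disjoint_left.mp hdisj hm) (Finset.mem_singleton_self _)
        simp [flipSet, hlS, hl] at h
    · rcases h0 with h | h
      · exact ⟨_, h⟩
      · exact absurd h hl
end

section
/- Let r, s ≥ 1 be fixed, let φ be a Boolean function on n ≥ 1 variables, and define the Boolean function φ' on n+1 variables by: φ'(Y) = true iff φ of the restriction of Y to the first n coordinates is true, or Y assigns false to the (n+1)-th variable. Then φ' is 0-valid (the all-false assignment is a model of φ'), and φ is satisfiable if and only if φ' has a δ(r,s)-model. -/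
/-- For fixed `r, s ≥ 1`, `φ` on `n ≥ 1` variables, and `φ'` on `n+1`
variables defined by `φ'(Y) = φ(Y restricted to the first n coordinates) ∨ (Y assigns
false to variable n+1)`: `φ'` is 0-valid, and `φ` is satisfiable iff `φ'` has a
`δ(r,s)`-model. -/
theorem statement4 (r s : ℕ) (hr : 1 ≤ r) (hs : 1 ≤ s) (n : ℕ) (hn : 1 ≤ n)
    (φ : (Fin n → Bool) → Prop) :
    (fun Y : Fin (n + 1) → Bool =>
        φ (fun i : Fin n => Y i.castSucc) ∨ Y (Fin.last n) = false)
      (fun _ => false) ∧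
    ((∃ X : Fin n → Bool, φ X) ↔
      ∃ Y : Fin (n + 1) → Bool,
        IsDeltaModel
          (fun Y : Fin (n + 1) → Bool =>
            φ (fun i : Fin n => Y i.castSucc) ∨ Y (Fin.last n) = false) r s Y) := by
  refine ⟨Or.inr rfl, ?_, ?_⟩
  · rintro ⟨X, hX⟩
    refine ⟨Fin.snoc X true, Or.inl ?_, ?_⟩
    · have h : (fun i : Fin n => (Fin.snoc X true : Fin (n+1) → Bool) i.castSucc) = X :=
        funext fun i => Fin.snoc_castSucc ..
      rw [h]; exact hX
    · intro B hBne hBcard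
      by_cases hlast : Fin.last n ∈ B
      · exact ⟨∅, by simp, by simp, Or.inr (by simp [flipSet, hlast, Fin.snoc_last])⟩
      · refine ⟨{Fin.last n}, by simpa using hs, by simpa using hlast, Or.inr ?_⟩
        simp [flipSet, hlast, Fin.snoc_last]
  · rintro ⟨Y, hY, hrep⟩
    rcases hY with h' | h'
    · exact ⟨_, h'⟩
    obtain ⟨S, hScard, hdisj, hmodel⟩ :=
      hrep {Fin.last n} ⟨_, Finset.mem_singleton_self _⟩ (by simpa using hr)
    rcases hmodel with h | h
    · exact ⟨_, h⟩
    · exfalso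
      have hlS : Fin.last n ∉ S := by
        intro hmem
        exact absurd rfl (Finset.disjoint_left.mp hdisj hmem ∘ Finset.mem_singleton.mpr)
      have hYl : Y (Fin.last n) = true := by
        simpa [flipSet, hlS] using h
      rw [h'] at hYl; exact Bool.false_ne_true hYl
end

section
/- If a 2-SAT formula φ has a δ(1,1)-model, then for every literal l there is no directed path of length at least 1 from l to ¬l in the implication graph G(φ). -/
/-- `flip1 X i` is the assignment `X` with bit `i` flipped. -/
def flip1 {V : Type*} [DecidableEq V] (X : V → Bool) (i : V) : V → Bool :=
  Function.update X i (! X i)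

/-- A `δ(1,1)`-model of `φ`: a model `X` such that for every index `i`, either `δ_i(X)` is a
model or there is some `j ≠ i` such that `δ_{ij}(X)` is a model. -/
def IsDelta11Model {V : Type*} [DecidableEq V] (φ : (V → Bool) → Prop) (X : V → Bool) : Prop :=
  φ X ∧ ∀ i : V, φ (flip1 X i) ∨ ∃ j, j ≠ i ∧ φ (flip1 (flip1 X i) j)

/-- A literal over `n` variables: a variable together with a polarity
(`true` = positive literal, `false` = negative literal). -/
abbrev Lit (n : ℕ) := Fin n × Bool

/-- The truth value of a literal under an assignment. -/
def litVal {n : ℕ} (X : Fin n → Bool) (l : Lit n) : Bool :=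
  if l.2 then X l.1 else ! X l.1

/-- The negation of a literal. -/
def negLit {n : ℕ} (l : Lit n) : Lit n := (l.1, ! l.2)

/-- A 2-SAT formula: a finite set of clauses, each a disjunction of two literals on
distinct variables. -/
structure TwoSat (n : ℕ) where
  clauses : Finset (Lit n × Lit n)
  distinct : ∀ c ∈ clauses, c.1.1 ≠ c.2.1

/-- An assignment is a model of a 2-SAT formula if it satisfies every clause. -/
def TwoSat.Sat {n : ℕ} (φ : TwoSat n) (X : Fin n → Bool) : Prop :=
  ∀ c ∈ φ.clauses, litVal X c.1 = true ∨ litVal X c.2 = true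

/-- The edges of the implication graph `G(φ)`: each clause `(a ∨ b)` contributes the
directed edges `(¬a, b)` and `(¬b, a)`. -/
def TwoSat.Edge {n : ℕ} (φ : TwoSat n) (a b : Lit n) : Prop :=
  ∃ c ∈ φ.clauses, (a = negLit c.1 ∧ b = c.2) ∨ (a = negLit c.2 ∧ b = c.1)

lemma litVal_neg {n : ℕ} (X : Fin n → Bool) (l : Lit n) :
    litVal X (negLit l) = ! litVal X l := by
  unfold litVal negLit; cases l.2 <;> simp

lemma litVal_flip_ne {n : ℕ} (X : Fin n → Bool) (i : Fin n) (l : Lit n) (h : l.1 ≠ i) :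
    litVal (flip1 X i) l = litVal X l := by
  unfold litVal flip1; rw [Function.update_of_ne h]

lemma litVal_flip_eq {n : ℕ} (X : Fin n → Bool) (l : Lit n) :
    litVal (flip1 X l.1) l = ! litVal X l := by
  unfold litVal flip1; cases l.2 <;> simp

lemma edge_prop {n : ℕ} (φ : TwoSat n) (X : Fin n → Bool) (hS : φ.Sat X) {a b : Lit n}
    (h : φ.Edge a b) (ha : litVal X a = true) : litVal X b = true := by
  obtain ⟨c, hc, ⟨h1, h2⟩ | ⟨h1, h2⟩⟩ := h <;> subst h1 <;> subst h2 <;>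
    rcases hS c hc with h' | h' <;> rw [litVal_neg] at ha <;> simp_all

lemma path_prop {n : ℕ} (φ : TwoSat n) (X : Fin n → Bool) (hS : φ.Sat X)
    (k : ℕ) (p : ℕ → Lit n) (hp : ∀ i < k, φ.Edge (p i) (p (i + 1)))
    (h0 : litVal X (p 0) = true) : litVal X (p k) = true := by
  induction k with
  | zero => exact h0
  | succ m ih =>
    exact edge_prop φ X hS (hp m (Nat.lt_succ_self m))
      (ih fun i hi => hp i (Nat.lt_succ_of_lt hi))

lemma model_not_true {n : ℕ} (φ : TwoSat n) (Y : Fin n → Bool) (hS : φ.Sat Y)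
    (l : Lit n) (k : ℕ) (p : ℕ → Lit n) (h0 : p 0 = l) (hk : p k = negLit l)
    (hp : ∀ i < k, φ.Edge (p i) (p (i + 1))) : litVal Y l = false := by
  by_contra h
  rw [Bool.not_eq_false] at h
  have := path_prop φ Y hS k p hp (by rwa [h0])
  rw [hk, litVal_neg, h] at this
  simp at this

/-- If a 2-SAT formula `φ` has a `δ(1,1)`-model, then for every literal `l`
there is no directed path of length at least 1 from `l` to `¬l` in `G(φ)`. -/
theorem statement5 {n : ℕ} (φ : TwoSat n) (X : Fin n → Bool)
    (hX : IsDelta11Model φ.Sat X) (l : Lit n) :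
    ¬ ∃ (k : ℕ) (p : ℕ → Lit n), 1 ≤ k ∧ p 0 = l ∧ p k = negLit l ∧
        ∀ i < k, φ.Edge (p i) (p (i + 1)) := by
  rintro ⟨k, p, hk1, h0, hk, hp⟩
  have hXl : litVal X l = false := model_not_true φ X hX.1 l k p h0 hk hp
  rcases hX.2 l.1 with h | ⟨j, hj, h⟩
  · have : litVal (flip1 X l.1) l = false := model_not_true φ _ h l k p h0 hk hp
    rw [litVal_flip_eq, hXl] at this
    simp at this
  · have : litVal (flip1 (flip1 X l.1) j) l = false := model_not_true φ _ h l k p h0 hk hp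
    rw [litVal_flip_ne _ _ _ (Ne.symm hj), litVal_flip_eq, hXl] at this
    simp at this
end

section
/- If a 2-SAT formula φ has a δ(1,1)-model, then the implication graph G(φ) satisfies: (i) every simple path in G(φ) has length at most 3; (ii) every simple cycle in G(φ) has length at most 2; (iii) every vertex of G(φ) takes part in at most one simple cycle (if (l, l', l) and (l, l'', l) are simple cycles then l' = l''). -/
namespace Stmt7Aux

lemma negLit_negLit {n : ℕ} (l : Lit n) : negLit (negLit l) = l := by
  simp [negLit]

lemma litVal_negLit {n : ℕ} (X : Fin n → Bool) (l : Lit n) :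
    litVal X (negLit l) = ! litVal X l := by
  rcases l with ⟨v, s⟩
  cases s <;> simp [litVal, negLit]

lemma litVal_flip1 {n : ℕ} (X : Fin n → Bool) (i : Fin n) (l : Lit n) :
    litVal (flip1 X i) l = if l.1 = i then ! litVal X l else litVal X l := by
  rcases l with ⟨v, s⟩
  by_cases hv : v = i <;> cases s <;>
    simp [litVal, flip1, Function.update_apply, hv]

lemma lit_of_false {n : ℕ} {X : Fin n → Bool} {l : Lit n}
    (h : litVal X l = false) : l = (l.1, ! X l.1) := by
  rcases l with ⟨v, s⟩
  cases s <;> simp_all [litVal]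

lemma edge_fst_ne {n : ℕ} {φ : TwoSat n} {a b : Lit n} (h : φ.Edge a b) : a.1 ≠ b.1 := by
  obtain ⟨c, hc, ⟨ha, hb⟩ | ⟨ha, hb⟩⟩ := h
  · have := φ.distinct c hc
    rw [ha, hb]; simpa [negLit] using this
  · have := φ.distinct c hc
    rw [ha, hb]; simpa [negLit] using this.symm

lemma edge_sat {n : ℕ} {φ : TwoSat n} {X : Fin n → Bool} (hX : φ.Sat X)
    {a b : Lit n} (h : φ.Edge a b) :
    litVal X (negLit a) = true ∨ litVal X b = true := by
  obtain ⟨c, hc, ⟨ha, hb⟩ | ⟨ha, hb⟩⟩ := h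
  · rw [ha, hb, negLit_negLit]; exact hX c hc
  · rw [ha, hb, negLit_negLit]; exact (hX c hc).symm

lemma edge_true {n : ℕ} {φ : TwoSat n} {X : Fin n → Bool} (hX : φ.Sat X)
    {a b : Lit n} (h : φ.Edge a b) (ha : litVal X a = true) :
    litVal X b = true := by
  rcases edge_sat hX h with h' | h'
  · rw [litVal_negLit, ha] at h'; simp at h'
  · exact h'

lemma edge_false {n : ℕ} {φ : TwoSat n} {X : Fin n → Bool} (hX : φ.Sat X)
    {a b : Lit n} (h : φ.Edge a b) (hb : litVal X b = false) :
    litVal X a = false := by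
  rcases edge_sat hX h with h' | h'
  · rw [litVal_negLit] at h'
    simpa using h'
  · rw [hb] at h'; simp at h'

lemma edge_neg {n : ℕ} {φ : TwoSat n} {a b : Lit n} (h : φ.Edge a b) :
    φ.Edge (negLit b) (negLit a) := by
  obtain ⟨c, hc, ⟨ha, hb⟩ | ⟨ha, hb⟩⟩ := h
  · exact ⟨c, hc, Or.inr ⟨by rw [hb], by rw [ha, negLit_negLit]⟩⟩
  · exact ⟨c, hc, Or.inl ⟨by rw [hb], by rw [ha, negLit_negLit]⟩⟩

/-- Core lemma: no two consecutive false-false edges with distinct end variables. -/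
lemma core {n : ℕ} {φ : TwoSat n} {X : Fin n → Bool} (hX : IsDelta11Model φ.Sat X)
    {a b c : Lit n} (hab : φ.Edge a b) (hbc : φ.Edge b c)
    (ha : litVal X a = false) (hb : litVal X b = false) (hc : litVal X c = false)
    (hac : a.1 ≠ c.1) : False := by
  obtain ⟨hXm, hδ⟩ := hX
  have hab' : a.1 ≠ b.1 := edge_fst_ne hab
  have hbc' : b.1 ≠ c.1 := edge_fst_ne hbc
  rcases hδ a.1 with h1 | ⟨j, hj, h2⟩
  · rcases edge_sat h1 hab with h' | h'
    · rw [litVal_flip1, litVal_negLit] at h'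
      simp only [negLit, ha] at h'
      simp at h'
    · rw [litVal_flip1, if_neg hab'.symm, hb] at h'
      exact absurd h' (by simp)
  · have hbj : b.1 = j := by
      rcases edge_sat h2 hab with h' | h'
      · rw [litVal_flip1, litVal_flip1, litVal_negLit] at h'
        simp only [negLit] at h'
        rw [if_neg (Ne.symm hj)] at h'
        simp [ha] at h'
      · by_contra hbj
        rw [litVal_flip1, litVal_flip1, if_neg hbj, if_neg hab'.symm, hb] at h'
        simp at h'
    rcases edge_sat h2 hbc with h' | h'
    · rw [litVal_flip1, litVal_flip1, litVal_negLit] at h'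
      simp only [negLit] at h'
      simp [hab'.symm, hbj, hj, hb] at h'
    · rw [litVal_flip1, litVal_flip1, if_neg (hbj ▸ hbc'.symm : c.1 ≠ j),
        if_neg hac.symm, hc] at h'
      simp at h'

/-- Dual core: no two consecutive true-true edges with distinct end variables. -/
lemma coreT {n : ℕ} {φ : TwoSat n} {X : Fin n → Bool} (hX : IsDelta11Model φ.Sat X)
    {a b c : Lit n} (hab : φ.Edge a b) (hbc : φ.Edge b c)
    (ha : litVal X a = true) (hb : litVal X b = true) (hc : litVal X c = true)
    (hac : a.1 ≠ c.1) : False := by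
  refine core hX (edge_neg hbc) (edge_neg hab) ?_ ?_ ?_ ?_
  · rw [litVal_negLit, hc]; rfl
  · rw [litVal_negLit, hb]; rfl
  · rw [litVal_negLit, ha]; rfl
  · simpa [negLit] using hac.symm

/-- Uniqueness of the false out-neighbour of a false literal. -/
lemma uniqF {n : ℕ} {φ : TwoSat n} {X : Fin n → Bool} (hX : IsDelta11Model φ.Sat X)
    {l l' l'' : Lit n} (h1 : φ.Edge l l') (h2 : φ.Edge l l'')
    (hl : litVal X l = false) (hl' : litVal X l' = false) (hl'' : litVal X l'' = false) :
    l' = l'' := by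
  obtain ⟨hXm, hδ⟩ := hX
  have h1' : l.1 ≠ l'.1 := edge_fst_ne h1
  have h2' : l.1 ≠ l''.1 := edge_fst_ne h2
  rcases hδ l.1 with ha | ⟨j, hj, hb⟩
  · exfalso
    rcases edge_sat ha h1 with h' | h'
    · rw [litVal_flip1, litVal_negLit] at h'
      simp only [negLit, hl] at h'
      simp at h'
    · rw [litVal_flip1, if_neg h1'.symm, hl'] at h'
      simp at h'
  · have key : ∀ m : Lit n, φ.Edge l m → litVal X m = false → m.1 = j := by
      intro m hm hmf
      rcases edge_sat hb hm with h' | h'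
      · rw [litVal_flip1, litVal_flip1, litVal_negLit] at h'
        simp only [negLit] at h'
        rw [if_neg (Ne.symm hj)] at h'
        simp [hl] at h'
      · by_contra hmj
        rw [litVal_flip1, litVal_flip1, if_neg hmj,
          if_neg (edge_fst_ne hm).symm, hmf] at h'
        simp at h'
    have e1 := key l' h1 hl'
    have e2 := key l'' h2 hl''
    rw [lit_of_false hl', lit_of_false hl'', e1, e2]

end Stmt7Aux

open Stmt7Aux in
/-- If a 2-SAT formula `φ` has a `δ(1,1)`-model, then (i) every simple path
in `G(φ)` has length at most 3; (ii) every simple cycle has length at most 2; (iii) every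
vertex takes part in at most one simple cycle. -/
theorem statement7 {n : ℕ} (φ : TwoSat n)
    (h : ∃ X : Fin n → Bool, IsDelta11Model φ.Sat X) :
    (∀ (k : ℕ) (p : ℕ → Lit n), (∀ i < k, φ.Edge (p i) (p (i + 1))) →
        (∀ i ≤ k, ∀ j ≤ k, i ≠ j → (p i).1 ≠ (p j).1) → k ≤ 3) ∧
    (∀ (k : ℕ) (p : ℕ → Lit n), 1 ≤ k → (∀ i < k, φ.Edge (p i) (p (i + 1))) →
        p k = p 0 → (∀ i < k, ∀ j < k, i ≠ j → (p i).1 ≠ (p j).1) → k ≤ 2) ∧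
    (∀ l l' l'' : Lit n, φ.Edge l l' → φ.Edge l' l → l.1 ≠ l'.1 →
        φ.Edge l l'' → φ.Edge l'' l → l.1 ≠ l''.1 → l' = l'') := by
  obtain ⟨X, hX⟩ := h
  have hXm : φ.Sat X := hX.1
  refine ⟨?_, ?_, ?_⟩
  · -- (i) paths
    intro k p hE hS
    by_contra hk
    push_neg at hk
    have hk4 : 4 ≤ k := hk
    cases hv : litVal X (p 2) with
    | false =>
      have h1 : litVal X (p 1) = false :=
        edge_false hXm (hE 1 (by omega)) hv
      have h0 : litVal X (p 0) = false :=
        edge_false hXm (hE 0 (by omega)) h1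
      exact core hX (hE 0 (by omega)) (hE 1 (by omega)) h0 h1 hv
        (hS 0 (by omega) 2 (by omega) (by omega))
    | true =>
      have h3 : litVal X (p 3) = true :=
        edge_true hXm (hE 2 (by omega)) hv
      have h4 : litVal X (p 4) = true :=
        edge_true hXm (hE 3 (by omega)) h3
      exact coreT hX (hE 2 (by omega)) (hE 3 (by omega)) hv h3 h4
        (hS 2 (by omega) 4 (by omega) (by omega))
  · -- (ii) cycles
    intro k p hk1 hE hcyc hS
    by_contra hk
    push_neg at hk
    have hk3 : 3 ≤ k := hk
    cases hv : litVal X (p 0) with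
    | true =>
      have h1 : litVal X (p 1) = true :=
        edge_true hXm (hE 0 (by omega)) hv
      have h2 : litVal X (p 2) = true :=
        edge_true hXm (hE 1 (by omega)) h1
      exact coreT hX (hE 0 (by omega)) (hE 1 (by omega)) hv h1 h2
        (hS 0 (by omega) 2 (by omega) (by omega))
    | false =>
      have e1 : k - 1 + 1 = k := by omega
      have e2 : k - 2 + 1 = k - 1 := by omega
      have hE1 : φ.Edge (p (k - 1)) (p k) := by
        have := hE (k - 1) (by omega); rwa [e1] at this
      have hE2 : φ.Edge (p (k - 2)) (p (k - 1)) := by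
        have := hE (k - 2) (by omega); rwa [e2] at this
      have hk0 : litVal X (p k) = false := by rw [hcyc]; exact hv
      have hkm1 : litVal X (p (k - 1)) = false := edge_false hXm hE1 hk0
      have hkm2 : litVal X (p (k - 2)) = false := edge_false hXm hE2 hkm1
      refine core hX hE2 hE1 hkm2 hkm1 hk0 ?_
      rw [hcyc]
      exact hS (k - 2) (by omega) 0 (by omega) (by omega)
  · -- (iii) uniqueness of 2-cycles
    intro l l' l'' h1 h1' hne h2 h2' hne'
    cases hv : litVal X l with
    | false =>
      have hl' : litVal X l' = false := edge_false hXm h1' hv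
      have hl'' : litVal X l'' = false := edge_false hXm h2' hv
      exact uniqF hX h1 h2 hv hl' hl''
    | true =>
      have hl' : litVal X l' = true := edge_true hXm h1 hv
      have hl'' : litVal X l'' = true := edge_true hXm h2 hv
      have : negLit l' = negLit l'' := by
        refine uniqF hX (edge_neg h1') (edge_neg h2') ?_ ?_ ?_
        · rw [litVal_negLit, hv]; rfl
        · rw [litVal_negLit, hl']; rfl
        · rw [litVal_negLit, hl'']; rfl
      have := congrArg negLit this
      rwa [negLit_negLit, negLit_negLit] at this
end

section
/- If a 2-SAT formula φ has a δ*(1,1)-model, then every nontrivial simple path in G(φ) has length 1; that is, G(φ) contains no simple path of length 2. -/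
lemma litVal_negLit {n : ℕ} (Y : Fin n → Bool) (l : Lit n) :
    litVal Y (negLit l) = !litVal Y l := by
  cases l with
  | mk v b => cases b <;> simp [litVal, negLit]

lemma edge_imp {n : ℕ} {φ : TwoSat n} {a b : Lit n} (e : φ.Edge a b)
    {Y : Fin n → Bool} (hY : φ.Sat Y) (ha : litVal Y a = true) :
    litVal Y b = true := by
  obtain ⟨c, hc, hcase⟩ := e
  have hor := hY c hc
  rcases hcase with ⟨h1, h2⟩ | ⟨h1, h2⟩
  · subst h1; subst h2
    rw [litVal_negLit] at ha
    rcases hor with hh | hh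
    · rw [hh] at ha; simp at ha
    · exact hh
  · subst h1; subst h2
    rw [litVal_negLit] at ha
    rcases hor with hh | hh
    · exact hh
    · rw [hh] at ha; simp at ha

lemma flip2_self {n : ℕ} (Y : Fin n → Bool) (i : Fin n) (S : Finset (Fin n)) (hi : i ∉ S) :
    flipSet (flipSet Y {i}) S i = !Y i := by simp [flipSet, hi]

lemma flip2_mem {n : ℕ} (Y : Fin n → Bool) (i : Fin n) (S : Finset (Fin n)) {j : Fin n}
    (hj : j ∈ S) (hji : j ≠ i) : flipSet (flipSet Y {i}) S j = !Y j := by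
  simp [flipSet, hj, hji]

lemma flip2_other {n : ℕ} (Y : Fin n → Bool) (i : Fin n) (S : Finset (Fin n)) {j : Fin n}
    (hj : j ∉ S) (hji : j ≠ i) : flipSet (flipSet Y {i}) S j = Y j := by
  simp [flipSet, hj, hji]

lemma litVal_congr {n : ℕ} {Y Z : Fin n → Bool} (l : Lit n) (h : Z l.1 = Y l.1) :
    litVal Z l = litVal Y l := by simp [litVal, h]

lemma litVal_flip {n : ℕ} {Y Z : Fin n → Bool} (l : Lit n) (h : Z l.1 = !Y l.1) :
    litVal Z l = !litVal Y l := by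
  cases l with
  | mk v b => cases b <;> simp_all [litVal]

lemma dk_sat {n : ℕ} {φ : TwoSat n} :
    ∀ {k : ℕ} {Y : Fin n → Bool}, IsDeltaKModel φ.Sat 1 1 k Y → φ.Sat Y
  | 0, _, h => h
  | k + 1, _, h => dk_sat h.1

lemma break_step {n : ℕ} {φ : TwoSat n} {k : ℕ} {Y : Fin n → Bool}
    (hY : IsDeltaKModel φ.Sat 1 1 (k + 1) Y) (i : Fin n) :
    ∃ S : Finset (Fin n), S.card ≤ 1 ∧ i ∉ S ∧
      IsDeltaKModel φ.Sat 1 1 k (flipSet (flipSet Y {i}) S) := by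
  obtain ⟨S, hS, hdisj, hmod⟩ := hY.2 {i} (Finset.singleton_nonempty i) (by simp)
  exact ⟨S, hS, Finset.disjoint_singleton_right.mp hdisj, hmod⟩

section PathLemmas

variable {n : ℕ} {φ : TwoSat n} {l1 l2 l3 : Lit n} {Y : Fin n → Bool}

lemma lemA (e12 : φ.Edge l1 l2) (e23 : φ.Edge l2 l3)
    (h12 : l1.1 ≠ l2.1) (h13 : l1.1 ≠ l3.1) (h23 : l2.1 ≠ l3.1)
    (hY : IsDeltaKModel φ.Sat 1 1 1 Y)
    (h1 : litVal Y l1 = false) (h2 : litVal Y l2 = false) : litVal Y l3 = true := by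
  obtain ⟨S, hS1, hiS, hZ⟩ := break_step hY l1.1
  have hsat : φ.Sat (flipSet (flipSet Y {l1.1}) S) := dk_sat hZ
  set Z := flipSet (flipSet Y {l1.1}) S with hZdef
  have hz1 : litVal Z l1 = true := by
    rw [litVal_flip l1 (flip2_self Y l1.1 S hiS), h1]; rfl
  have hz2 : litVal Z l2 = true := edge_imp e12 hsat hz1
  have hm2 : l2.1 ∈ S := by
    by_contra hm
    rw [litVal_congr l2 (flip2_other Y l1.1 S hm (Ne.symm h12)), h2] at hz2
    simp at hz2
  have hm3 : l3.1 ∉ S := fun hh => h23 (Finset.card_le_one.mp hS1 _ hm2 _ hh)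
  have hz3 := edge_imp e23 hsat hz2
  rw [litVal_congr l3 (flip2_other Y l1.1 S hm3 (Ne.symm h13))] at hz3
  exact hz3

lemma lemC (e12 : φ.Edge l1 l2) (e23 : φ.Edge l2 l3)
    (h12 : l1.1 ≠ l2.1) (h13 : l1.1 ≠ l3.1) (h23 : l2.1 ≠ l3.1)
    (hY : IsDeltaKModel φ.Sat 1 1 1 Y)
    (h1 : litVal Y l1 = true) (h2 : litVal Y l2 = true) (h3 : litVal Y l3 = true) :
    False := by
  obtain ⟨S, hS1, hiS, hZ⟩ := break_step hY l3.1
  have hsat : φ.Sat (flipSet (flipSet Y {l3.1}) S) := dk_sat hZ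
  set Z := flipSet (flipSet Y {l3.1}) S with hZdef
  have hz3 : litVal Z l3 = false := by
    rw [litVal_flip l3 (flip2_self Y l3.1 S hiS), h3]; rfl
  have hm2 : l2.1 ∈ S := by
    by_contra hm
    have hz2 : litVal Z l2 = true := by
      rw [litVal_congr l2 (flip2_other Y l3.1 S hm h23), h2]
    have := edge_imp e23 hsat hz2
    rw [this] at hz3; simp at hz3
  have hm1 : l1.1 ∉ S := fun hh => h12 (Finset.card_le_one.mp hS1 _ hh _ hm2)
  have hz1 : litVal Z l1 = true := by
    rw [litVal_congr l1 (flip2_other Y l3.1 S hm1 h13), h1]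
  have hz2 := edge_imp e12 hsat hz1
  rw [litVal_flip l2 (flip2_mem Y l3.1 S hm2 h23), h2] at hz2
  simp at hz2

lemma lemB (e12 : φ.Edge l1 l2) (e23 : φ.Edge l2 l3)
    (h12 : l1.1 ≠ l2.1) (h13 : l1.1 ≠ l3.1) (h23 : l2.1 ≠ l3.1)
    (hY : IsDeltaKModel φ.Sat 1 1 2 Y)
    (h1 : litVal Y l1 = false) (h2 : litVal Y l2 = false) : False := by
  have h3 := lemA e12 e23 h12 h13 h23 hY.1 h1 h2
  obtain ⟨S, hS1, hiS, hZ⟩ := break_step hY l1.1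
  have hsat : φ.Sat (flipSet (flipSet Y {l1.1}) S) := dk_sat hZ
  set Z := flipSet (flipSet Y {l1.1}) S with hZdef
  have hz1 : litVal Z l1 = true := by
    rw [litVal_flip l1 (flip2_self Y l1.1 S hiS), h1]; rfl
  have hz2 : litVal Z l2 = true := edge_imp e12 hsat hz1
  have hm2 : l2.1 ∈ S := by
    by_contra hm
    rw [litVal_congr l2 (flip2_other Y l1.1 S hm (Ne.symm h12)), h2] at hz2
    simp at hz2
  have hm3 : l3.1 ∉ S := fun hh => h23 (Finset.card_le_one.mp hS1 _ hm2 _ hh)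
  have hz3 : litVal Z l3 = true := by
    rw [litVal_congr l3 (flip2_other Y l1.1 S hm3 (Ne.symm h13)), h3]
  exact lemC e12 e23 h12 h13 h23 hZ hz1 hz2 hz3

lemma lemD (e12 : φ.Edge l1 l2) (e23 : φ.Edge l2 l3)
    (h12 : l1.1 ≠ l2.1) (h13 : l1.1 ≠ l3.1) (h23 : l2.1 ≠ l3.1)
    (hY : IsDeltaKModel φ.Sat 1 1 2 Y)
    (h2 : litVal Y l2 = true) (h3 : litVal Y l3 = true) : False := by
  obtain ⟨S, hS1, hiS, hZ⟩ := break_step hY l3.1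
  have hsat : φ.Sat (flipSet (flipSet Y {l3.1}) S) := dk_sat hZ
  set Z := flipSet (flipSet Y {l3.1}) S with hZdef
  have hz3 : litVal Z l3 = false := by
    rw [litVal_flip l3 (flip2_self Y l3.1 S hiS), h3]; rfl
  have hm2 : l2.1 ∈ S := by
    by_contra hm
    have hz2 : litVal Z l2 = true := by
      rw [litVal_congr l2 (flip2_other Y l3.1 S hm h23), h2]
    have := edge_imp e23 hsat hz2
    rw [this] at hz3; simp at hz3
  have hz2 : litVal Z l2 = false := by
    rw [litVal_flip l2 (flip2_mem Y l3.1 S hm2 h23), h2]; rfl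
  have hm1 : l1.1 ∉ S := fun hh => h12 (Finset.card_le_one.mp hS1 _ hh _ hm2)
  have hz1 : litVal Z l1 = false := by
    cases hv : litVal Z l1 with
    | false => rfl
    | true =>
      have := edge_imp e12 hsat hv
      rw [hz2] at this; simp at this
  have := lemA e12 e23 h12 h13 h23 hZ hz1 hz2
  rw [hz3] at this; simp at this

end PathLemmas

/-- If a 2-SAT formula `φ` has a `δ*(1,1)`-model, then `G(φ)` contains no
simple path of length 2. -/
theorem statement10 {n : ℕ} (φ : TwoSat n)
    (h : ∃ X : Fin n → Bool, IsDeltaStarModel φ.Sat X) :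
    ¬ ∃ l1 l2 l3 : Lit n, φ.Edge l1 l2 ∧ φ.Edge l2 l3 ∧
        l1.1 ≠ l2.1 ∧ l1.1 ≠ l3.1 ∧ l2.1 ≠ l3.1 := by
  obtain ⟨X, hX⟩ := h
  rintro ⟨l1, l2, l3, e12, e23, h12, h13, h23⟩
  have h2X := hX 2
  have hsat : φ.Sat X := dk_sat h2X
  cases hb : litVal X l2 with
  | true => exact lemD e12 e23 h12 h13 h23 h2X hb (edge_imp e23 hsat hb)
  | false =>
    have ha : litVal X l1 = false := by
      cases hv : litVal X l1 with
      | false => rfl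
      | true =>
        have := edge_imp e12 hsat hv
        rw [this] at hb; simp at hb
    exact lemB e12 e23 h12 h13 h23 h2X ha hb
end

section
/- Let s ≥ 1 and let φ be the CNF formula over the 2s+2 variables x, y, β_1, …, β_{2s} whose clauses are: (β_i ⇒ β_{i+1}) for 1 ≤ i ≤ s−1; (β_s ⇒ x); (β_s ⇒ y); (x ⇒ β_{s+1}); (y ⇒ β_{s+1}); and (β_i ⇒ β_{i+1}) for s+1 ≤ i ≤ 2s−1. Then a model X of φ is a δ(1,s)-model of φ if and only if X(x) ≠ X(y). -/
/-- The gadget formula `φ(x, y, β₁, …, β_{2s})` of Equation (4): here the variable `x` is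
`Sum.inl true`, `y` is `Sum.inl false`, and `β_{j+1}` is `Sum.inr j` for `j : Fin (2s)`.
Its clauses are `β_i ⇒ β_{i+1}` (`1 ≤ i ≤ s-1`), `β_s ⇒ x`, `β_s ⇒ y`, `x ⇒ β_{s+1}`,
`y ⇒ β_{s+1}`, and `β_i ⇒ β_{i+1}` (`s+1 ≤ i ≤ 2s-1`). -/
def gadgetSat (s : ℕ) (hs : 1 ≤ s) (X : Bool ⊕ Fin (2 * s) → Bool) : Prop :=
  (∀ j : ℕ, ∀ h : j + 1 < s, X (Sum.inr ⟨j, by omega⟩) = true →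
      X (Sum.inr ⟨j + 1, by omega⟩) = true) ∧
  (X (Sum.inr ⟨s - 1, by omega⟩) = true → X (Sum.inl true) = true) ∧
  (X (Sum.inr ⟨s - 1, by omega⟩) = true → X (Sum.inl false) = true) ∧
  (X (Sum.inl true) = true → X (Sum.inr ⟨s, by omega⟩) = true) ∧
  (X (Sum.inl false) = true → X (Sum.inr ⟨s, by omega⟩) = true) ∧
  (∀ j : ℕ, ∀ h1 : s ≤ j, ∀ h2 : j + 1 < 2 * s, X (Sum.inr ⟨j, by omega⟩) = true →
      X (Sum.inr ⟨j + 1, by omega⟩) = true)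

lemma flipSet_empty {V : Type*} [DecidableEq V] (X : V → Bool) : flipSet X ∅ = X := by
  funext i; simp [flipSet]

lemma flip2_notMem {V : Type*} [DecidableEq V] (X : V → Bool) {B S : Finset V} {v : V}
    (hS : v ∉ S) (hB : v ∉ B) : flipSet (flipSet X B) S v = X v := by
  simp [flipSet, hS, hB]

lemma flip2_mem_S {V : Type*} [DecidableEq V] (X : V → Bool) {B S : Finset V} {v : V}
    (hS : v ∈ S) (hB : v ∉ B) : flipSet (flipSet X B) S v = !X v := by
  simp [flipSet, hS, hB]

lemma flip2_mem_B {V : Type*} [DecidableEq V] (X : V → Bool) {B S : Finset V} {v : V}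
    (hS : v ∉ S) (hB : v ∈ B) : flipSet (flipSet X B) S v = !X v := by
  simp [flipSet, hS, hB]

lemma gadget_mono_low {s : ℕ} {hs : 1 ≤ s} {Y : Bool ⊕ Fin (2 * s) → Bool}
    (hY : gadgetSat s hs Y) :
    ∀ k j : ℕ, ∀ (hk : k < 2 * s) (hj : j < 2 * s), j ≤ k → k < s →
      Y (Sum.inr ⟨j, hj⟩) = true → Y (Sum.inr ⟨k, hk⟩) = true := by
  intro k
  induction k with
  | zero =>
    intro j _ _ hjk _ h
    have hj0 : j = 0 := by omega
    subst hj0; exact h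
  | succ n ih =>
    intro j hk hj hjk hks h
    rcases Nat.lt_or_ge j (n + 1) with h1 | h1
    · exact hY.1 n (by omega) (ih j (by omega) hj (by omega) (by omega) h)
    · have hj1 : j = n + 1 := by omega
      subst hj1; exact h

lemma gadget_mono_high {s : ℕ} {hs : 1 ≤ s} {Y : Bool ⊕ Fin (2 * s) → Bool}
    (hY : gadgetSat s hs Y) :
    ∀ k j : ℕ, ∀ (hk : k < 2 * s) (hj : j < 2 * s), j ≤ k → s ≤ j →
      Y (Sum.inr ⟨j, hj⟩) = true → Y (Sum.inr ⟨k, hk⟩) = true := by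
  intro k
  induction k with
  | zero =>
    intro j _ _ hjk hsj _
    exact absurd hsj (by omega)
  | succ n ih =>
    intro j hk hj hjk hsj h
    rcases Nat.lt_or_ge j (n + 1) with h1 | h1
    · exact hY.2.2.2.2.2 n (by omega) (by omega) (ih j (by omega) hj (by omega) hsj h)
    · have hj1 : j = n + 1 := by omega
      subst hj1; exact h

lemma sat_of_profile (s : ℕ) (hs : 1 ≤ s) (Y : Bool ⊕ Fin (2 * s) → Bool) (t : ℕ)
    (hβ : ∀ k : Fin (2 * s), Y (Sum.inr k) = decide (t ≤ k.val))
    (h1 : t < s → Y (Sum.inl true) = true ∧ Y (Sum.inl false) = true)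
    (h2 : (Y (Sum.inl true) = true ∨ Y (Sum.inl false) = true) → t ≤ s) :
    gadgetSat s hs Y := by
  refine ⟨?_, ?_, ?_, ?_, ?_, ?_⟩
  · intro j h hj; rw [hβ] at hj ⊢; simp at hj ⊢; omega
  · intro h; rw [hβ] at h; simp at h; exact (h1 (by omega)).1
  · intro h; rw [hβ] at h; simp at h; exact (h1 (by omega)).2
  · intro h; rw [hβ]; simp; exact h2 (Or.inl h)
  · intro h; rw [hβ]; simp; exact h2 (Or.inr h)
  · intro j h1' h2' hj; rw [hβ] at hj ⊢; simp at hj ⊢; omega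
lemma backward_dir (s : ℕ) (hs : 1 ≤ s) (X : Bool ⊕ Fin (2 * s) → Bool)
    (hX : gadgetSat s hs X) (hne : X (Sum.inl true) ≠ X (Sum.inl false)) :
    IsDeltaModel (gadgetSat s hs) 1 s X := by
  classical
  -- basic facts about X
  have hβs : X (Sum.inr ⟨s, by omega⟩) = true := by
    cases hxt : X (Sum.inl true) with
    | true => exact hX.2.2.2.1 hxt
    | false =>
      have hyf : X (Sum.inl false) = true := by
        cases h : X (Sum.inl false) with
        | false => exact absurd (hxt.trans h.symm) hne
        | true => rfl
      exact hX.2.2.2.2.1 hyf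
  have hβs1 : X (Sum.inr ⟨s - 1, by omega⟩) = false := by
    cases h : X (Sum.inr ⟨s - 1, by omega⟩) with
    | false => rfl
    | true => exact absurd ((hX.2.1 h).trans (hX.2.2.1 h).symm) hne
  have hXlow : ∀ j (hj : j < 2 * s), j < s → X (Sum.inr ⟨j, hj⟩) = false := by
    intro j hj hjs
    cases h : X (Sum.inr ⟨j, hj⟩) with
    | false => rfl
    | true =>
      have h2 := gadget_mono_low hX (s - 1) j (by omega) hj (by omega) (by omega) h
      rw [hβs1] at h2; exact absurd h2 (by simp)
  have hXhigh : ∀ j (hj : j < 2 * s), s ≤ j → X (Sum.inr ⟨j, hj⟩) = true :=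
    fun j hj hsj => gadget_mono_high hX j s hj (by omega) hsj (le_refl s) hβs
  obtain ⟨c0, hc0, hc1⟩ : ∃ c0 : Bool, X (Sum.inl c0) = false ∧ X (Sum.inl (!c0)) = true := by
    cases hxt : X (Sum.inl true) with
    | true =>
      refine ⟨false, ?_, by simpa using hxt⟩
      cases h : X (Sum.inl false) with
      | false => rfl
      | true => exact absurd (hxt.trans h.symm) hne
    | false =>
      refine ⟨true, hxt, ?_⟩
      cases h : X (Sum.inl false) with
      | false => exact absurd (hxt.trans h.symm) hne
      | true => simpa using h
  refine ⟨hX, ?_⟩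
  intro B hBne hBcard
  have hB1 : B.card = 1 := le_antisymm hBcard (Finset.card_pos.mpr hBne)
  obtain ⟨b, rfl⟩ := Finset.card_eq_one.mp hB1
  cases b with
  | inl c =>
    refine ⟨∅, by simp, by simp, ?_⟩
    rw [flipSet_empty]
    refine sat_of_profile s hs _ s ?_ (fun h => absurd h (lt_irrefl s)) (fun _ => le_refl s)
    intro ⟨kv, hkv⟩
    have hnb : (Sum.inr ⟨kv, hkv⟩ : Bool ⊕ Fin (2 * s)) ∉ ({Sum.inl c} : Finset _) := by simp
    have hval : flipSet X {Sum.inl c} (Sum.inr ⟨kv, hkv⟩) = X (Sum.inr ⟨kv, hkv⟩) := by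
      simp [flipSet, hnb]
    rw [hval]
    rcases Nat.lt_or_ge kv s with h | h
    · rw [hXlow kv hkv h]
      (symm; simp only [Fin.val_mk, decide_eq_false_iff_not]; omega)
    · rw [hXhigh kv hkv h]
      (symm; simp only [Fin.val_mk, decide_eq_true_eq]; omega)
  | inr k =>
    obtain ⟨j, hj⟩ := k
    rcases Nat.lt_or_ge j s with hjs | hjs
    · -- low break: flip β_j from false to true
      refine ⟨insert (Sum.inl c0)
        (((Finset.Ico (j + 1) s).attachFin
          (fun m hm => by simp [Finset.mem_Ico] at hm; omega)).image Sum.inr), ?_, ?_, ?_⟩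
      · refine le_trans (Finset.card_insert_le _ _) ?_
        rw [Finset.card_image_of_injective _ Sum.inr_injective, Finset.card_attachFin,
          Nat.card_Ico]
        omega
      · rw [Finset.disjoint_singleton_right]
        simp only [Finset.mem_insert, Finset.mem_image, Finset.mem_attachFin, Finset.mem_Ico]
        push_neg
        refine ⟨by simp, fun a ha => ?_⟩
        simp only [ne_eq, Sum.inr.injEq, Fin.ext_iff, Fin.val_mk]
        omega
      · refine sat_of_profile s hs _ j ?_ (fun _ => ?_) (fun _ => by omega)
        · intro ⟨kv, hkv⟩
          rcases Nat.lt_trichotomy kv j with h | h | h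
          · rw [flip2_notMem, hXlow kv hkv (by omega)]
            · (symm; simp only [Fin.val_mk, Bool.not_false, Bool.not_true, decide_eq_true_eq, decide_eq_false_iff_not]; omega)
            · simp only [Finset.mem_insert, Finset.mem_image, Finset.mem_attachFin,
                Finset.mem_Ico]
              push_neg
              exact ⟨by simp, fun a ha => by simp [Fin.ext_iff] at ha ⊢; omega⟩
            · simp [Fin.ext_iff]; omega
          · subst h
            rw [flip2_mem_B, hXlow kv hkv (by omega)]
            · (symm; simp only [Fin.val_mk, Bool.not_false, Bool.not_true, decide_eq_true_eq, decide_eq_false_iff_not]; omega)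
            · simp only [Finset.mem_insert, Finset.mem_image, Finset.mem_attachFin,
                Finset.mem_Ico]
              push_neg
              exact ⟨by simp, fun a ha => by simp [Fin.ext_iff] at ha ⊢; omega⟩
            · simp
          · rcases Nat.lt_or_ge kv s with h2 | h2
            · rw [flip2_mem_S, hXlow kv hkv h2]
              · (symm; simp only [Fin.val_mk, Bool.not_false, Bool.not_true, decide_eq_true_eq, decide_eq_false_iff_not]; omega)
              · simp only [Finset.mem_insert, Finset.mem_image, Finset.mem_attachFin,
                  Finset.mem_Ico]
                right
                exact ⟨⟨kv, hkv⟩, by simp; omega, rfl⟩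
              · simp [Fin.ext_iff]; omega
            · rw [flip2_notMem, hXhigh kv hkv h2]
              · (symm; simp only [Fin.val_mk, Bool.not_false, Bool.not_true, decide_eq_true_eq, decide_eq_false_iff_not]; omega)
              · simp only [Finset.mem_insert, Finset.mem_image, Finset.mem_attachFin,
                  Finset.mem_Ico]
                push_neg
                exact ⟨by simp, fun a ha => by simp [Fin.ext_iff] at ha ⊢; omega⟩
              · simp [Fin.ext_iff]; omega
        · -- x and y both true after repair
          have hYc0 : flipSet (flipSet X {Sum.inr ⟨j, hj⟩})
              (insert (Sum.inl c0) (((Finset.Ico (j + 1) s).attachFin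
                (fun m hm => by simp [Finset.mem_Ico] at hm; omega)).image Sum.inr))
              (Sum.inl c0) = true := by
            rw [flip2_mem_S X (Finset.mem_insert_self _ _) (by simp), hc0]; rfl
          have hYc1 : flipSet (flipSet X {Sum.inr ⟨j, hj⟩})
              (insert (Sum.inl c0) (((Finset.Ico (j + 1) s).attachFin
                (fun m hm => by simp [Finset.mem_Ico] at hm; omega)).image Sum.inr))
              (Sum.inl (!c0)) = true := by
            rw [flip2_notMem, hc1]
            · simp only [Finset.mem_insert, Finset.mem_image, Finset.mem_attachFin,
                Finset.mem_Ico]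
              push_neg
              exact ⟨by simp, fun a ha => by simp⟩
            · simp
          have hall : ∀ b : Bool, flipSet (flipSet X {Sum.inr ⟨j, hj⟩})
              (insert (Sum.inl c0) (((Finset.Ico (j + 1) s).attachFin
                (fun m hm => by simp [Finset.mem_Ico] at hm; omega)).image Sum.inr))
              (Sum.inl b) = true := by
            intro b
            rcases (by cases b <;> cases c0 <;> simp : b = c0 ∨ b = !c0) with h | h
            · rw [h]; exact hYc0
            · rw [h]; exact hYc1
          exact ⟨hall true, hall false⟩
    · -- high break: flip β_j from true to false
      refine ⟨insert (Sum.inl (!c0))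
        (((Finset.Ico s j).attachFin
          (fun m hm => by simp [Finset.mem_Ico] at hm; omega)).image Sum.inr), ?_, ?_, ?_⟩
      · refine le_trans (Finset.card_insert_le _ _) ?_
        rw [Finset.card_image_of_injective _ Sum.inr_injective, Finset.card_attachFin,
          Nat.card_Ico]
        omega
      · rw [Finset.disjoint_singleton_right]
        simp only [Finset.mem_insert, Finset.mem_image, Finset.mem_attachFin, Finset.mem_Ico]
        push_neg
        refine ⟨by simp, fun a ha => ?_⟩
        simp only [ne_eq, Sum.inr.injEq, Fin.ext_iff, Fin.val_mk]
        omega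
      · refine sat_of_profile s hs _ (j + 1) ?_ (fun h => absurd h (by omega)) ?_
        · intro ⟨kv, hkv⟩
          rcases Nat.lt_or_ge kv s with h | h
          · rw [flip2_notMem, hXlow kv hkv h]
            · (symm; simp only [Fin.val_mk, Bool.not_false, Bool.not_true, decide_eq_true_eq, decide_eq_false_iff_not]; omega)
            · simp only [Finset.mem_insert, Finset.mem_image, Finset.mem_attachFin,
                Finset.mem_Ico]
              push_neg
              exact ⟨by simp, fun a ha => by simp [Fin.ext_iff] at ha ⊢; omega⟩
            · simp [Fin.ext_iff]; omega
          · rcases Nat.lt_trichotomy kv j with h2 | h2 | h2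
            · rw [flip2_mem_S, hXhigh kv hkv h]
              · (symm; simp only [Fin.val_mk, Bool.not_false, Bool.not_true, decide_eq_true_eq, decide_eq_false_iff_not]; omega)
              · simp only [Finset.mem_insert, Finset.mem_image, Finset.mem_attachFin,
                  Finset.mem_Ico]
                right
                exact ⟨⟨kv, hkv⟩, by simp; omega, rfl⟩
              · simp [Fin.ext_iff]; omega
            · subst h2
              rw [flip2_mem_B, hXhigh kv hkv h]
              · (symm; simp only [Fin.val_mk, Bool.not_false, Bool.not_true, decide_eq_true_eq, decide_eq_false_iff_not]; omega)
              · simp only [Finset.mem_insert, Finset.mem_image, Finset.mem_attachFin,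
                  Finset.mem_Ico]
                push_neg
                exact ⟨by simp, fun a ha => by simp [Fin.ext_iff] at ha ⊢; omega⟩
              · simp
            · rw [flip2_notMem, hXhigh kv hkv h]
              · (symm; simp only [Fin.val_mk, Bool.not_false, Bool.not_true, decide_eq_true_eq, decide_eq_false_iff_not]; omega)
              · simp only [Finset.mem_insert, Finset.mem_image, Finset.mem_attachFin,
                  Finset.mem_Ico]
                push_neg
                exact ⟨by simp, fun a ha => by simp [Fin.ext_iff] at ha ⊢; omega⟩
              · simp [Fin.ext_iff]; omega
        · -- x and y both false after repair
          intro h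
          exfalso
          have hYc1 : flipSet (flipSet X {Sum.inr ⟨j, hj⟩})
              (insert (Sum.inl (!c0)) (((Finset.Ico s j).attachFin
                (fun m hm => by simp [Finset.mem_Ico] at hm; omega)).image Sum.inr))
              (Sum.inl (!c0)) = false := by
            rw [flip2_mem_S X (Finset.mem_insert_self _ _) (by simp), hc1]; rfl
          have hYc0 : flipSet (flipSet X {Sum.inr ⟨j, hj⟩})
              (insert (Sum.inl (!c0)) (((Finset.Ico s j).attachFin
                (fun m hm => by simp [Finset.mem_Ico] at hm; omega)).image Sum.inr))
              (Sum.inl c0) = false := by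
            rw [flip2_notMem, hc0]
            · simp only [Finset.mem_insert, Finset.mem_image, Finset.mem_attachFin,
                Finset.mem_Ico]
              push_neg
              exact ⟨by cases c0 <;> simp, fun a ha => by simp⟩
            · simp
          have hall : ∀ b : Bool, flipSet (flipSet X {Sum.inr ⟨j, hj⟩})
              (insert (Sum.inl (!c0)) (((Finset.Ico s j).attachFin
                (fun m hm => by simp [Finset.mem_Ico] at hm; omega)).image Sum.inr))
              (Sum.inl b) = false := by
            intro b
            rcases (by cases b <;> cases c0 <;> simp : b = c0 ∨ b = !c0) with h' | h'
            · rw [h']; exact hYc0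
            · rw [h']; exact hYc1
          rcases h with h | h
          · rw [hall true] at h; exact absurd h (by simp)
          · rw [hall false] at h; exact absurd h (by simp)

lemma forward_dir (s : ℕ) (hs : 1 ≤ s) (X : Bool ⊕ Fin (2 * s) → Bool)
    (hX : gadgetSat s hs X) (h : IsDeltaModel (gadgetSat s hs) 1 s X) :
    X (Sum.inl true) ≠ X (Sum.inl false) := by
  classical
  intro heq
  cases hxt : X (Sum.inl true) with
  | true =>
    -- both true; break β_{2s} (index 2s-1)
    have hβs : X (Sum.inr ⟨s, by omega⟩) = true := hX.2.2.2.1 hxt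
    have hXhigh : ∀ j (hj : j < 2 * s), s ≤ j → X (Sum.inr ⟨j, hj⟩) = true :=
      fun j hj hsj => gadget_mono_high hX j s hj (by omega) hsj (le_refl s) hβs
    obtain ⟨S, hScard, hdisj, hsat⟩ := h.2 {Sum.inr ⟨2 * s - 1, by omega⟩}
      (Finset.singleton_nonempty _) (by simp)
    set Y := flipSet (flipSet X {Sum.inr ⟨2 * s - 1, by omega⟩}) S with hYdef
    have hYlast : Y (Sum.inr ⟨2 * s - 1, by omega⟩) = false := by
      rw [hYdef, flip2_mem_B X (Finset.disjoint_right.mp hdisj (Finset.mem_singleton_self _))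
        (Finset.mem_singleton_self _), hXhigh (2 * s - 1) (by omega) (by omega)]
      rfl
    have hYhigh : ∀ j (hj : j < 2 * s), s ≤ j → Y (Sum.inr ⟨j, hj⟩) = false := by
      intro j hj hsj
      cases h' : Y (Sum.inr ⟨j, hj⟩) with
      | false => rfl
      | true =>
        have h2 := gadget_mono_high hsat (2 * s - 1) j (by omega) hj (by omega) hsj h'
        rw [hYlast] at h2; exact absurd h2 (by simp)
    have hYx : ∀ b : Bool, Y (Sum.inl b) = false := by
      intro b
      cases h' : Y (Sum.inl b) with
      | false => rfl
      | true =>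
        have h2 : Y (Sum.inr ⟨s, by omega⟩) = true := by
          cases b
          · exact hsat.2.2.2.2.1 h'
          · exact hsat.2.2.2.1 h'
        rw [hYhigh s (by omega) (le_refl s)] at h2; exact absurd h2 (by simp)
    -- the set of s+1 variables that must all lie in S
    have hTsub : insert ((Sum.inl true : Bool ⊕ Fin (2 * s))) (insert (Sum.inl false)
        (((Finset.Ico s (2 * s - 1)).attachFin (n := 2 * s)
          (fun m hm => by simp [Finset.mem_Ico] at hm; omega)).image (Sum.inr : Fin (2 * s) → Bool ⊕ Fin (2 * s)))) ⊆ S := by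
      intro v hv
      by_contra hvS
      have hvB : v ∉ ({Sum.inr ⟨2 * s - 1, by omega⟩} : Finset (Bool ⊕ Fin (2 * s))) := by
        simp only [Finset.mem_insert, Finset.mem_image, Finset.mem_attachFin,
          Finset.mem_Ico] at hv
        rcases hv with rfl | rfl | ⟨a, ha, rfl⟩
        · simp
        · simp
        · simp only [Finset.mem_singleton, ne_eq, Sum.inr.injEq, Fin.ext_iff, Fin.val_mk]
          omega
      have hYv : Y v = X v := flip2_notMem X hvS hvB
      simp only [Finset.mem_insert, Finset.mem_image, Finset.mem_attachFin,
        Finset.mem_Ico] at hv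
      rcases hv with rfl | rfl | ⟨a, ha, rfl⟩
      · rw [hYx true, hxt] at hYv; exact absurd hYv (by simp)
      · rw [hYx false, ← heq, hxt] at hYv; exact absurd hYv (by simp)
      · have h1 : Y (Sum.inr a) = false := hYhigh a.val a.isLt ha.1
        have h2 : X (Sum.inr a) = true := hXhigh a.val a.isLt ha.1
        rw [h1, h2] at hYv; exact absurd hYv (by simp)
    have hTcard : (insert ((Sum.inl true : Bool ⊕ Fin (2 * s))) (insert (Sum.inl false)
        (((Finset.Ico s (2 * s - 1)).attachFin (n := 2 * s)
          (fun m hm => by simp [Finset.mem_Ico] at hm; omega)).image (Sum.inr : Fin (2 * s) → Bool ⊕ Fin (2 * s))))).card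
        = s + 1 := by
      rw [Finset.card_insert_of_notMem (by simp), Finset.card_insert_of_notMem (by simp),
        Finset.card_image_of_injective _ Sum.inr_injective, Finset.card_attachFin, Nat.card_Ico]
      omega
    have := Finset.card_le_card hTsub
    rw [hTcard] at this
    omega
  | false =>
    -- both false; break β_1 (index 0)
    have hβs1 : X (Sum.inr ⟨s - 1, by omega⟩) = false := by
      cases h' : X (Sum.inr ⟨s - 1, by omega⟩) with
      | false => rfl
      | true => rw [hX.2.1 h'] at hxt; exact absurd hxt (by simp)
    have hXlow : ∀ j (hj : j < 2 * s), j < s → X (Sum.inr ⟨j, hj⟩) = false := by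
      intro j hj hjs
      cases h' : X (Sum.inr ⟨j, hj⟩) with
      | false => rfl
      | true =>
        have h2 := gadget_mono_low hX (s - 1) j (by omega) hj (by omega) (by omega) h'
        rw [hβs1] at h2; exact absurd h2 (by simp)
    obtain ⟨S, hScard, hdisj, hsat⟩ := h.2 {Sum.inr ⟨0, by omega⟩}
      (Finset.singleton_nonempty _) (by simp)
    set Y := flipSet (flipSet X {Sum.inr ⟨0, by omega⟩}) S with hYdef
    have hYfirst : Y (Sum.inr ⟨0, by omega⟩) = true := by
      rw [hYdef, flip2_mem_B X (Finset.disjoint_right.mp hdisj (Finset.mem_singleton_self _))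
        (Finset.mem_singleton_self _), hXlow 0 (by omega) (by omega)]
      rfl
    have hYlow : ∀ j (hj : j < 2 * s), j < s → Y (Sum.inr ⟨j, hj⟩) = true :=
      fun j hj hjs => gadget_mono_low hsat j 0 hj (by omega) (by omega) hjs hYfirst
    have hYx : ∀ b : Bool, Y (Sum.inl b) = true := by
      intro b
      have h2 : Y (Sum.inr ⟨s - 1, by omega⟩) = true := hYlow (s - 1) (by omega) (by omega)
      cases b
      · exact hsat.2.2.1 h2
      · exact hsat.2.1 h2
    have hTsub : insert ((Sum.inl true : Bool ⊕ Fin (2 * s))) (insert (Sum.inl false)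
        (((Finset.Ico 1 s).attachFin (n := 2 * s)
          (fun m hm => by simp [Finset.mem_Ico] at hm; omega)).image (Sum.inr : Fin (2 * s) → Bool ⊕ Fin (2 * s)))) ⊆ S := by
      intro v hv
      by_contra hvS
      have hvB : v ∉ ({Sum.inr ⟨0, by omega⟩} : Finset (Bool ⊕ Fin (2 * s))) := by
        simp only [Finset.mem_insert, Finset.mem_image, Finset.mem_attachFin,
          Finset.mem_Ico] at hv
        rcases hv with rfl | rfl | ⟨a, ha, rfl⟩
        · simp
        · simp
        · simp only [Finset.mem_singleton, ne_eq, Sum.inr.injEq, Fin.ext_iff, Fin.val_mk]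
          omega
      have hYv : Y v = X v := flip2_notMem X hvS hvB
      simp only [Finset.mem_insert, Finset.mem_image, Finset.mem_attachFin,
        Finset.mem_Ico] at hv
      rcases hv with rfl | rfl | ⟨a, ha, rfl⟩
      · rw [hYx true, hxt] at hYv; exact absurd hYv (by simp)
      · rw [hYx false, ← heq, hxt] at hYv; exact absurd hYv (by simp)
      · have h1 : Y (Sum.inr a) = true := hYlow a.val a.isLt ha.2
        have h2 : X (Sum.inr a) = false := hXlow a.val a.isLt ha.2
        rw [h1, h2] at hYv; exact absurd hYv (by simp)
    have hTcard : (insert ((Sum.inl true : Bool ⊕ Fin (2 * s))) (insert (Sum.inl false)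
        (((Finset.Ico 1 s).attachFin (n := 2 * s)
          (fun m hm => by simp [Finset.mem_Ico] at hm; omega)).image (Sum.inr : Fin (2 * s) → Bool ⊕ Fin (2 * s))))).card
        = s + 1 := by
      rw [Finset.card_insert_of_notMem (by simp), Finset.card_insert_of_notMem (by simp),
        Finset.card_image_of_injective _ Sum.inr_injective, Finset.card_attachFin, Nat.card_Ico]
      omega
    have := Finset.card_le_card hTsub
    rw [hTcard] at this
    omega

/-- A model `X` of the gadget formula is a `δ(1,s)`-model iff
`X(x) ≠ X(y)`. -/
theorem statement12 (s : ℕ) (hs : 1 ≤ s) (X : Bool ⊕ Fin (2 * s) → Bool)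
    (hX : gadgetSat s hs X) :
    IsDeltaModel (gadgetSat s hs) 1 s X ↔ X (Sum.inl true) ≠ X (Sum.inl false) :=
  ⟨forward_dir s hs X hX, backward_dir s hs X hX⟩
end

section
/- An affine formula φ has a δ(1,1)-model if and only if φ is satisfiable and for every variable v appearing in some clause of φ there exists a variable w ≠ v such that v and w appear in exactly the same clauses of φ. -/
/-- An affine formula: a finite set of clauses, each consisting of a nonempty set of
variables together with a target parity (`true` = odd, `false` = even). -/
structure AffineFormula (n : ℕ) where
  clauses : Finset (Finset (Fin n) × Bool)
  clauses_nonempty : ∀ c ∈ clauses, c.1.Nonempty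

/-- An assignment is a model of an affine formula if for each clause, the number of its
variables set to true has the prescribed parity. -/
def AffineFormula.Sat {n : ℕ} (φ : AffineFormula n) (X : Fin n → Bool) : Prop :=
  ∀ c ∈ φ.clauses, (c.1.filter fun i => X i = true).card % 2 = (if c.2 then 1 else 0)

lemma sat_iff {n : ℕ} (φ : AffineFormula n) (X : Fin n → Bool) :
    φ.Sat X ↔ ∀ c ∈ φ.clauses,
      (∑ j ∈ c.1, if X j then (1 : ZMod 2) else 0) = if c.2 then 1 else 0 := by
  unfold AffineFormula.Sat
  refine forall₂_congr fun c hc => ?_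
  have hsum : (∑ j ∈ c.1, if X j then (1 : ZMod 2) else 0)
      = ((c.1.filter fun i => X i = true).card : ZMod 2) := by
    rw [Finset.sum_boole]
  rw [hsum]
  have key : ∀ (m t : ℕ), t < 2 → (((m : ZMod 2) = (t : ZMod 2)) ↔ m % 2 = t) := by
    intro m t ht
    rw [ZMod.natCast_eq_natCast_iff, Nat.ModEq]
    omega
  have ht : (if c.2 then (1 : ZMod 2) else 0) = ((if c.2 then 1 else 0 : ℕ) : ZMod 2) := by
    cases c.2 <;> simp
  rw [ht, key _ _ (by cases c.2 <;> simp)]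

lemma flip_sum {n : ℕ} (X : Fin n → Bool) (i : Fin n) (s : Finset (Fin n)) :
    (∑ j ∈ s, if flip1 X i j then (1 : ZMod 2) else 0)
      = (∑ j ∈ s, if X j then (1 : ZMod 2) else 0) + (if i ∈ s then 1 else 0) := by
  by_cases hi : i ∈ s
  · rw [← Finset.add_sum_erase s _ hi, ← Finset.add_sum_erase s _ hi, if_pos hi]
    have hrest : (∑ j ∈ s.erase i, if flip1 X i j then (1 : ZMod 2) else 0)
        = ∑ j ∈ s.erase i, if X j then (1 : ZMod 2) else 0 :=
      Finset.sum_congr rfl fun j hj => by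
        have hne : j ≠ i := Finset.ne_of_mem_erase hj
        simp [flip1, Function.update_of_ne hne]
    rw [hrest]
    have hii : flip1 X i i = !X i := by simp [flip1]
    rw [hii]
    have hb : ∀ b : Bool, (if !b then (1 : ZMod 2) else 0) = (if b then 1 else 0) + 1 := by
      decide
    rw [hb]
    ring
  · rw [if_neg hi, add_zero]
    refine Finset.sum_congr rfl fun j hj => ?_
    have hne : j ≠ i := fun h => hi (h ▸ hj)
    simp [flip1, Function.update_of_ne hne]

lemma sat_flip1_iff {n : ℕ} (φ : AffineFormula n) (X : Fin n → Bool) (i : Fin n)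
    (hX : φ.Sat X) : φ.Sat (flip1 X i) ↔ ∀ c ∈ φ.clauses, i ∉ c.1 := by
  rw [sat_iff] at *
  refine forall₂_congr fun c hc => ?_
  rw [flip_sum, hX c hc, add_eq_left]
  split_ifs with h <;> simp [h]

lemma sat_flip2_iff {n : ℕ} (φ : AffineFormula n) (X : Fin n → Bool) (i j : Fin n)
    (hX : φ.Sat X) : φ.Sat (flip1 (flip1 X i) j) ↔ ∀ c ∈ φ.clauses, (i ∈ c.1 ↔ j ∈ c.1) := by
  rw [sat_iff] at *
  refine forall₂_congr fun c hc => ?_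
  rw [flip_sum, flip_sum, hX c hc, add_assoc, add_eq_left]
  by_cases hi : i ∈ c.1 <;> by_cases hj : j ∈ c.1 <;> simp [hi, hj] <;> decide

/-- An affine formula `φ` has a `δ(1,1)`-model iff `φ` is satisfiable and
for every variable `v` appearing in some clause of `φ` there exists a variable `w ≠ v`
appearing in exactly the same clauses of `φ` as `v`. -/
theorem statement13 {n : ℕ} (φ : AffineFormula n) :
    (∃ X : Fin n → Bool, IsDelta11Model φ.Sat X) ↔
      ((∃ X : Fin n → Bool, φ.Sat X) ∧
        ∀ v : Fin n, (∃ c ∈ φ.clauses, v ∈ c.1) →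
          ∃ w : Fin n, w ≠ v ∧ ∀ c ∈ φ.clauses, (v ∈ c.1 ↔ w ∈ c.1)) := by
  constructor
  · rintro ⟨X, hX, hδ⟩
    refine ⟨⟨X, hX⟩, fun v ⟨c0, hc0, hv⟩ => ?_⟩
    rcases hδ v with h | ⟨j, hji, hjsat⟩
    · exact absurd hv ((sat_flip1_iff φ X v hX).mp h c0 hc0)
    · exact ⟨j, hji, fun c hc => (sat_flip2_iff φ X v j hX).mp hjsat c hc⟩
  · rintro ⟨⟨X, hX⟩, hw⟩
    refine ⟨X, hX, fun i => ?_⟩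
    by_cases hi : ∃ c ∈ φ.clauses, i ∈ c.1
    · obtain ⟨w, hwi, hsame⟩ := hw i hi
      exact Or.inr ⟨w, hwi, (sat_flip2_iff φ X i w hX).mpr hsame⟩
    · push_neg at hi
      exact Or.inl ((sat_flip1_iff φ X i hX).mpr hi)
end

section
/- Let r, s ≥ 1. An affine formula φ has a δ(r,s)-model if and only if φ is satisfiable and for every set R of at most r variables there exists a set S of at most s variables with S disjoint from R such that, for every clause C of φ, the number of variables of R appearing in C has the same parity as the number of variables of S appearing in C. -/
lemma flip_card_zmod {n : ℕ} (c T : Finset (Fin n)) (X : Fin n → Bool) :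
    (((c.filter fun i => flipSet X T i = true).card : ZMod 2)) =
      ((c.filter fun i => X i = true).card : ZMod 2) + ((c ∩ T).card : ZMod 2) := by
  classical
  rw [← Finset.filter_mem_eq_inter, Finset.card_filter, Finset.card_filter, Finset.card_filter,
    Nat.cast_sum, Nat.cast_sum, Nat.cast_sum, ← Finset.sum_add_distrib]
  apply Finset.sum_congr rfl
  intro i _
  simp only [flipSet]
  by_cases h : i ∈ T
  · simp only [h, if_true]
    cases X i <;> simp <;> decide
  · simp only [h, if_false]
    simp

lemma sat_flip_iff {n : ℕ} (φ : AffineFormula n) (X : Fin n → Bool) (hX : φ.Sat X)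
    (B S : Finset (Fin n)) :
    φ.Sat (flipSet (flipSet X B) S) ↔
      ∀ c ∈ φ.clauses, (c.1 ∩ B).card % 2 = (c.1 ∩ S).card % 2 := by
  unfold AffineFormula.Sat at *
  apply forall₂_congr
  intro c hc
  have ht : (if c.2 then 1 else 0 : ℕ) % 2 = (if c.2 then 1 else 0 : ℕ) := by
    split <;> rfl
  rw [show ((if c.2 then 1 else 0 : ℕ)) = (if c.2 then 1 else 0 : ℕ) % 2 from ht.symm]
  simp only [← ZMod.natCast_eq_natCast_iff']
  rw [flip_card_zmod, flip_card_zmod]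
  have hX' : ((c.1.filter fun i => X i = true).card : ZMod 2)
      = ((if c.2 then 1 else 0 : ℕ) : ZMod 2) := by
    rw [ZMod.natCast_eq_natCast_iff', ht]
    exact hX c hc
  rw [hX', add_assoc]
  set t := ((if c.2 then 1 else 0 : ℕ) : ZMod 2)
  constructor
  · intro h
    have h0 : ((c.1 ∩ B).card : ZMod 2) + ((c.1 ∩ S).card : ZMod 2) = 0 :=
      add_left_cancel (h.trans (add_zero t).symm)
    rwa [CharTwo.add_eq_iff_eq_add, zero_add] at h0
  · intro h
    rw [← h, CharTwo.add_self_eq_zero, add_zero]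

/-- For `r, s ≥ 1`, an affine formula `φ` has a `δ(r,s)`-model iff `φ` is
satisfiable and for every set `R` of at most `r` variables there is a set `S` of at most
`s` variables disjoint from `R` such that for every clause `C` of `φ`, the number of
variables of `R` in `C` has the same parity as the number of variables of `S` in `C`. -/
theorem statement14 {n : ℕ} (r s : ℕ) (hr : 1 ≤ r) (hs : 1 ≤ s) (φ : AffineFormula n) :
    (∃ X : Fin n → Bool, IsDeltaModel φ.Sat r s X) ↔
      ((∃ X : Fin n → Bool, φ.Sat X) ∧
        ∀ R : Finset (Fin n), R.card ≤ r →
          ∃ S : Finset (Fin n), S.card ≤ s ∧ Disjoint S R ∧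
            ∀ c ∈ φ.clauses, (c.1 ∩ R).card % 2 = (c.1 ∩ S).card % 2) := by
  constructor
  · rintro ⟨X, hX, hB⟩
    refine ⟨⟨X, hX⟩, fun R hR => ?_⟩
    rcases R.eq_empty_or_nonempty with rfl | hne
    · exact ⟨∅, by simp, by simp, fun c _ => by simp⟩
    · obtain ⟨S, hS, hdis, hsat⟩ := hB R hne hR
      exact ⟨S, hS, hdis, (sat_flip_iff φ X hX R S).mp hsat⟩
  · rintro ⟨⟨X, hX⟩, h⟩
    refine ⟨X, hX, fun B hne hB => ?_⟩
    obtain ⟨S, hS, hdis, hpar⟩ := h B hB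
    exact ⟨S, hS, hdis, (sat_flip_iff φ X hX B S).mpr hpar⟩
end

section
/- If an affine formula φ has a δ(1,1)-model, then every model of φ is a δ*(1,1)-model of φ. In particular, an affine formula has a δ(1,1)-model if and only if it has a δ*(1,1)-model. -/
lemma flip_card_cast {n : ℕ} (X : Fin n → Bool) (T c : Finset (Fin n)) :
    ((c.filter fun i => flipSet X T i = true).card : ZMod 2) =
      ((c.filter fun i => X i = true).card : ZMod 2) + ((c ∩ T).card : ZMod 2) := by
  have hI : c ∩ T = c.filter (· ∈ T) := by
    ext i; simp [Finset.mem_filter, Finset.mem_inter]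
  rw [hI, Finset.card_filter, Finset.card_filter, Finset.card_filter,
    Nat.cast_sum, Nat.cast_sum, Nat.cast_sum, ← Finset.sum_add_distrib]
  refine Finset.sum_congr rfl fun i _ => ?_
  by_cases h : i ∈ T <;> cases hx : X i <;> simp [flipSet, h, hx] <;> decide

lemma cast_eq_iff_mod (m t : ℕ) (ht : t < 2) :
    ((m : ZMod 2) = (t : ZMod 2)) ↔ m % 2 = t := by
  rw [ZMod.natCast_eq_natCast_iff, Nat.ModEq, Nat.mod_eq_of_lt ht]

lemma sat_cast {n : ℕ} (φ : AffineFormula n) (X : Fin n → Bool) :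
    φ.Sat X ↔ ∀ c ∈ φ.clauses,
      (((c.1.filter fun i => X i = true).card : ZMod 2) =
        if c.2 then 1 else 0) := by
  unfold AffineFormula.Sat
  refine forall_congr' fun c => forall_congr' fun _ => ?_
  cases hc2 : c.2
  · simpa using (cast_eq_iff_mod (c.1.filter fun i => X i = true).card 0 (by norm_num)).symm
  · simpa using (cast_eq_iff_mod (c.1.filter fun i => X i = true).card 1 (by norm_num)).symm

lemma flip_flip_sat {n : ℕ} (φ : AffineFormula n) {X Y : Fin n → Bool}
    (hX : φ.Sat X) (hY : φ.Sat Y) (B S : Finset (Fin n))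
    (h : φ.Sat (flipSet (flipSet X B) S)) : φ.Sat (flipSet (flipSet Y B) S) := by
  rw [sat_cast] at hX hY h ⊢
  intro c hc
  have := h c hc
  rw [flip_card_cast, flip_card_cast, hX c hc] at this
  rw [flip_card_cast, flip_card_cast, hY c hc]
  exact this

/-- If an affine formula `φ` has a `δ(1,1)`-model, then every model of `φ`
is a `δ*(1,1)`-model of `φ`.  In particular, `φ` has a `δ(1,1)`-model iff it has a
`δ*(1,1)`-model. -/
theorem statement15 {n : ℕ} (φ : AffineFormula n) :
    ((∃ X₀ : Fin n → Bool, IsDeltaModel φ.Sat 1 1 X₀) →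
      ∀ X : Fin n → Bool, φ.Sat X → IsDeltaStarModel φ.Sat X) ∧
    ((∃ X : Fin n → Bool, IsDeltaModel φ.Sat 1 1 X) ↔
      ∃ X : Fin n → Bool, IsDeltaStarModel φ.Sat X) := by
  have main : (∃ X₀ : Fin n → Bool, IsDeltaModel φ.Sat 1 1 X₀) →
      ∀ X : Fin n → Bool, φ.Sat X → IsDeltaStarModel φ.Sat X := by
    rintro ⟨X₀, hX₀sat, hX₀rep⟩ X hX k
    induction k generalizing X with
    | zero => exact hX
    | succ k ih =>
      refine ⟨ih X hX, fun B hB hcard => ?_⟩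
      obtain ⟨S, hScard, hdisj, hsat⟩ := hX₀rep B hB hcard
      exact ⟨S, hScard, hdisj, ih _ (flip_flip_sat φ hX₀sat hX B S hsat)⟩
  refine ⟨main, ⟨fun ⟨X₀, h⟩ => ⟨X₀, main ⟨X₀, h⟩ X₀ h.1⟩, ?_⟩⟩
  rintro ⟨X, hX⟩
  have h1 := hX 1
  obtain ⟨h0, hrep⟩ := h1
  exact ⟨X, h0, fun B hB hcard => hrep B hB hcard⟩
end

section
/- Let n ≥ 2 be even and let φ be the Boolean function on n variables v_1, …, v_n whose models are exactly the assignments with v_{2i−1} = v_{2i} for all 1 ≤ i ≤ n/2. Then every model of φ is a δ*(1,1)-model of φ. -/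
/-- Let `n ≥ 2` be even and let `φ` be the Boolean function on `n` variables
whose models are exactly the assignments with `v_{2i-1} = v_{2i}` for all `1 ≤ i ≤ n/2`
(0-indexed: bit `2k` equals bit `2k+1`).  Then every model of `φ` is a
`δ*(1,1)`-model of `φ`. -/
theorem statement17 (n : ℕ) (hn : 2 ≤ n) (heven : Even n)
    (φ : (Fin n → Bool) → Prop)
    (hφ : ∀ X : Fin n → Bool, φ X ↔
      ∀ (k : ℕ) (h : 2 * k + 1 < n), X ⟨2 * k, by omega⟩ = X ⟨2 * k + 1, h⟩) :
    ∀ X : Fin n → Bool, φ X → IsDeltaStarModel φ X := by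
  -- Key step: any single-bit break of a model can be repaired by flipping its partner.
  have key : ∀ Y : Fin n → Bool, φ Y → ∀ i : Fin n,
      ∃ p : Fin n, p ≠ i ∧ φ (flipSet (flipSet Y {i}) {p}) := by
    intro Y hY i
    rw [hφ] at hY
    obtain ⟨m, hm⟩ := heven
    rcases Nat.even_or_odd i.val with ⟨a, ha⟩ | ⟨a, ha⟩
    · have hp : i.val + 1 < n := by have := i.isLt; omega
      refine ⟨⟨i.val + 1, hp⟩, ?_, ?_⟩
      · intro h
        have := congrArg Fin.val h
        simp at this
      · rw [hφ]
        intro k hk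
        simp only [flipSet, Finset.mem_singleton, Fin.ext_iff]
        by_cases hka : k = a
        · have c1 : ¬ (2 * k = i.val + 1) := by omega
          have c2 : 2 * k = i.val := by omega
          have c3 : 2 * k + 1 = i.val + 1 := by omega
          have c4 : ¬ (2 * k + 1 = i.val) := by omega
          rw [if_neg c1, if_pos c2, if_pos c3, if_neg c4]
          exact congrArg Bool.not (hY k hk)
        · have c1 : ¬ (2 * k = i.val + 1) := by omega
          have c2 : ¬ (2 * k = i.val) := by omega
          have c3 : ¬ (2 * k + 1 = i.val + 1) := by omega
          have c4 : ¬ (2 * k + 1 = i.val) := by omega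
          rw [if_neg c1, if_neg c2, if_neg c3, if_neg c4]
          exact hY k hk
    · have hp : i.val - 1 < n := by have := i.isLt; omega
      refine ⟨⟨i.val - 1, hp⟩, ?_, ?_⟩
      · intro h
        have := congrArg Fin.val h
        simp only [Fin.val_mk] at this
        omega
      · rw [hφ]
        intro k hk
        simp only [flipSet, Finset.mem_singleton, Fin.ext_iff]
        by_cases hka : k = a
        · have c1 : 2 * k = i.val - 1 := by omega
          have c2 : ¬ (2 * k = i.val) := by omega
          have c3 : ¬ (2 * k + 1 = i.val - 1) := by omega
          have c4 : 2 * k + 1 = i.val := by omega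
          rw [if_pos c1, if_neg c2, if_neg c3, if_pos c4]
          exact congrArg Bool.not (hY k hk)
        · have c1 : ¬ (2 * k = i.val - 1) := by omega
          have c2 : ¬ (2 * k = i.val) := by omega
          have c3 : ¬ (2 * k + 1 = i.val - 1) := by omega
          have c4 : ¬ (2 * k + 1 = i.val) := by omega
          rw [if_neg c1, if_neg c2, if_neg c3, if_neg c4]
          exact hY k hk
  -- Every model is a δ^k(1,1)-model, by induction on k.
  have main : ∀ k : ℕ, ∀ Y : Fin n → Bool, φ Y → IsDeltaKModel φ 1 1 k Y := by
    intro k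
    induction k with
    | zero => intro Y hY; exact hY
    | succ k ih =>
      intro Y hY
      refine ⟨ih Y hY, ?_⟩
      intro B hBne hBcard
      obtain ⟨i, hi⟩ := Finset.card_eq_one.mp (le_antisymm hBcard hBne.card_pos)
      subst hi
      obtain ⟨p, hpi, hpφ⟩ := key Y hY i
      exact ⟨{p}, by simp, Finset.disjoint_singleton.mpr hpi, ih _ hpφ⟩
  intro X hX k
  exact main k X hX
end

section
/- Let φ be a Boolean function on n variables and let M be a stable set of φ. Then every X ∈ M is a δ*(1,1)-model of φ. -/
/-- A stable set of `φ`: a set `M` of `δ(1,1)`-models of `φ` such that every break to a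
member of `M` is repaired (if a repair is needed) within `M`. -/
def IsStableSet {n : ℕ} (φ : (Fin n → Bool) → Prop) (M : Set (Fin n → Bool)) : Prop :=
  (∀ X ∈ M, IsDelta11Model φ X) ∧
    ∀ X ∈ M, ∀ i : Fin n, flip1 X i ∈ M ∨ ∃ j, j ≠ i ∧ flip1 (flip1 X i) j ∈ M


lemma flipSet_singleton_s18 {V : Type*} [DecidableEq V] (X : V → Bool) (i : V) :
    flipSet X {i} = flip1 X i := by
  funext j
  by_cases h : j = i
  · subst h; simp [flipSet, flip1]
  · simp [flipSet, flip1, h, Function.update_of_ne h]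

/-- If `M` is a stable set of `φ`, then every `X ∈ M` is a `δ*(1,1)`-model
of `φ`. -/
theorem statement18 {n : ℕ} (φ : (Fin n → Bool) → Prop) (M : Set (Fin n → Bool))
    (hM : IsStableSet φ M) :
    ∀ X ∈ M, IsDeltaStarModel φ X := by
  intro X hX k
  induction k generalizing X with
  | zero => exact (hM.1 X hX).1
  | succ k ih =>
    refine ⟨ih X hX, ?_⟩
    intro B hBne hBcard
    obtain ⟨i, rfl⟩ := Finset.card_eq_one.mp (le_antisymm hBcard hBne.card_pos)
    rcases hM.2 X hX i with h | ⟨j, hji, h⟩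
    · exact ⟨∅, by simp, by simp, by
        rw [flipSet_singleton_s18, flipSet_empty]; exact ih _ h⟩
    · exact ⟨{j}, by simp, by simpa using hji, by
        rw [flipSet_singleton_s18, flipSet_singleton_s18]; exact ih _ h⟩
end
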